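/- If a well-behaved reconciliation μ for a Join bag (L∪R, S, F) is valid, then its (left→past, right→future)-restriction is a valid signature for the left child bag (L, S, F∪R), and its (right→past, left→future)-restriction is a valid signature for the right child bag (R, S, F∪L). -/

import Mathlib

namespace TreeContainment

open scoped Classical

variable {V Λ : Type}

/-- A directed graph with an explicit vertex set. -/
structure DGraph (V : Type) where
  verts : Set V
  Arc : V → V → Prop
  arc_left : ∀ ⦃u v : V⦄, Arc u v → u ∈ verts
  arc_right : ∀ ⦃u v : V⦄, Arc u v → v ∈ verts

noncomputable def DGraph.inDeg (G : DGraph V) (v : V) : ℕ := {u : V | G.Arc u v}.ncard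
noncomputable def DGraph.outDeg (G : DGraph V) (v : V) : ℕ := {u : V | G.Arc v u}.ncard
def DGraph.Acyclic (G : DGraph V) : Prop := ∀ v : V, ¬ Relation.TransGen G.Arc v v

def IsSubgraph (H G : DGraph V) : Prop :=
  H.verts ⊆ G.verts ∧ ∀ ⦃u v⦄, H.Arc u v → G.Arc u v

/-- The consecutive pairs (arcs) of a list of vertices. -/
def listArcs (p : List V) : List (V × V) := p.zip p.tail

def IsArcOf (p : List V) (a b : V) : Prop := (a, b) ∈ listArcs p

lemma isArcOf_mem_left {p : List V} {a b : V} (h : IsArcOf p a b) : a ∈ p :=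
  (List.of_mem_zip h).1

lemma isArcOf_mem_right {p : List V} {a b : V} (h : IsArcOf p a b) : b ∈ p :=
  List.mem_of_mem_tail (List.of_mem_zip h).2

/-- `p` is a directed path from `u` to `v` with respect to the arc relation `A`. -/
def DipathFrom (A : V → V → Prop) (u v : V) (p : List V) : Prop :=
  p.Chain' A ∧ p.Nodup ∧ p.head? = some u ∧ p.getLast? = some v

/-- Rooted binary phylogenetic network. -/
def IsBinPhyloNet (N : DGraph V) : Prop :=
  N.Acyclic ∧ N.verts.Finite ∧ N.verts.Nonempty ∧
  (∃! ρ, ρ ∈ N.verts ∧ N.inDeg ρ = 0) ∧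
  ∀ v ∈ N.verts,
    (N.inDeg v = 0 ∧ N.outDeg v = 2) ∨ (N.inDeg v = 1 ∧ N.outDeg v = 0) ∨
    (N.inDeg v = 2 ∧ N.outDeg v = 1) ∨ (N.inDeg v = 1 ∧ N.outDeg v = 2)

/-- Rooted binary phylogenetic tree: a binary phylogenetic network without reticulations. -/
def IsBinPhyloTree (T : DGraph V) : Prop :=
  IsBinPhyloNet T ∧ ∀ v ∈ T.verts, T.inDeg v ≤ 1

def leaves (G : DGraph V) : Set V :=
  {v : V | v ∈ G.verts ∧ G.inDeg v = 1 ∧ G.outDeg v = 0}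

/-- Equally labelled leaves of `N` and `T` are identified: the common vertices of the two
graphs are exactly the leaves of each side. -/
def SharedLeaves (N T : DGraph V) : Prop :=
  N.verts ∩ T.verts = leaves N ∧ N.verts ∩ T.verts = leaves T

/-- A witness that `H` is a subdivision of the tree `Tg`. -/
structure SubdivWitness (H Tg : DGraph V) where
  vmap : V → V
  pmap : V → V → List V
  vmap_mem : ∀ u ∈ Tg.verts, vmap u ∈ H.verts
  inj : ∀ u ∈ Tg.verts, ∀ v ∈ Tg.verts, vmap u = vmap v → u = v
  path_spec : ∀ ⦃u v⦄, Tg.Arc u v → DipathFrom H.Arc (vmap u) (vmap v) (pmap u v)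
  path_len : ∀ ⦃u v⦄, Tg.Arc u v → 2 ≤ (pmap u v).length
  internal_new : ∀ ⦃u v⦄, Tg.Arc u v → ∀ z ∈ pmap u v, z ≠ vmap u → z ≠ vmap v →
    ∀ w ∈ Tg.verts, vmap w ≠ z
  internal_disjoint : ∀ ⦃u v u' v'⦄, Tg.Arc u v → Tg.Arc u' v' → (u, v) ≠ (u', v') →
    ∀ z, z ∈ pmap u v → z ∈ pmap u' v' →
      (z = vmap u ∨ z = vmap v) ∧ (z = vmap u' ∨ z = vmap v')
  arcs_cover : ∀ a b, H.Arc a b → ∃ u v, Tg.Arc u v ∧ IsArcOf (pmap u v) a b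
  verts_cover : ∀ z ∈ H.verts, (∃ u ∈ Tg.verts, vmap u = z) ∨ ∃ u v, Tg.Arc u v ∧ z ∈ pmap u v

/-- `N` displays `T`: some subgraph of `N` is a subdivision of `T`, respecting
the (identified) leaf labels. -/
def Displays (N T : DGraph V) : Prop :=
  ∃ H : DGraph V, IsSubgraph H N ∧
    ∃ w : SubdivWitness H T, ∀ u ∈ T.verts ∩ N.verts, w.vmap u = u

/-- An embedding function of the tree `Tg` into the network `Ng`
(an embedding function on the display graph `D(Ng,Tg)`). -/
structure EmbOn (Tg Ng : DGraph V) where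
  vmap : V → V
  pmap : V → V → List V
  vmap_mem : ∀ u ∈ Tg.verts, vmap u ∈ Ng.verts
  path_spec : ∀ ⦃u v⦄, Tg.Arc u v → DipathFrom Ng.Arc (vmap u) (vmap v) (pmap u v)
  inj : ∀ u ∈ Tg.verts, ∀ v ∈ Tg.verts, vmap u = vmap v → u = v
  fixes : ∀ u ∈ Tg.verts ∩ Ng.verts, vmap u = u
  arc_disjoint : ∀ ⦃u v u' v'⦄, Tg.Arc u v → Tg.Arc u' v' → (u, v) ≠ (u', v') →
    ∀ e, e ∈ listArcs (pmap u v) → e ∉ listArcs (pmap u' v')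
  share : ∀ ⦃u v u' v'⦄, Tg.Arc u v → Tg.Arc u' v' → (u, v) ≠ (u', v') →
    ∀ z, z ∈ pmap u v → z ∈ pmap u' v' →
      ∃ w, (w = u ∨ w = v) ∧ (w = u' ∨ w = v') ∧ vmap w = z

/-- The subgraph of the network consisting of all arcs lying on some embedding path. -/
def usedSubgraph (Tg Ng : DGraph V) (φ : EmbOn Tg Ng) : DGraph V where
  verts := {z : V | ∃ u v, Tg.Arc u v ∧ z ∈ φ.pmap u v}
  Arc a b := ∃ u v, Tg.Arc u v ∧ IsArcOf (φ.pmap u v) a b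
  arc_left := by
    rintro a b ⟨u, v, huv, harc⟩
    exact ⟨u, v, huv, isArcOf_mem_left harc⟩
  arc_right := by
    rintro a b ⟨u, v, huv, harc⟩
    exact ⟨u, v, huv, isArcOf_mem_right harc⟩

/-- A display graph: a DAG whose vertex set is covered by a tree side `VT`
and a network side `VN`, satisfying the degree conditions of the paper. -/
structure DispGraph (V : Type) extends DGraph V where
  VT : Set V
  VN : Set V
  union_eq : VT ∪ VN = verts
  finite : verts.Finite
  acyclic : ∀ v : V, ¬ Relation.TransGen Arc v v
  tree_indeg : ∀ v : V, {u : V | Arc u v ∧ u ∈ VT ∧ v ∈ VT}.ncard ≤ 1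
  indeg_le : ∀ v : V, {u : V | Arc u v}.ncard ≤ 2
  outdeg_le : ∀ v : V, {u : V | Arc v u}.ncard ≤ 2
  totdeg_le : ∀ v : V, {u : V | Arc u v}.ncard + {u : V | Arc v u}.ncard ≤ 3
  shared_out : ∀ v ∈ VT ∩ VN, ∀ u, ¬ Arc v u
  shared_in_T : ∀ v ∈ VT ∩ VN, {u : V | Arc u v ∧ u ∈ VT}.ncard ≤ 1
  shared_in_N : ∀ v ∈ VT ∩ VN, {u : V | Arc u v ∧ u ∈ VN}.ncard ≤ 1

/-- The tree side of a display graph. -/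
def DispGraph.treeSide (G : DispGraph V) : DGraph V where
  verts := G.VT
  Arc u v := G.Arc u v ∧ u ∈ G.VT ∧ v ∈ G.VT
  arc_left := by intro u v h; exact h.2.1
  arc_right := by intro u v h; exact h.2.2

/-- The network side of a display graph. -/
def DispGraph.netSide (G : DispGraph V) : DGraph V where
  verts := G.VN
  Arc u v := G.Arc u v ∧ u ∈ G.VN ∧ v ∈ G.VN
  arc_left := by intro u v h; exact h.2.1
  arc_right := by intro u v h; exact h.2.2

def DispGraph.TArc (G : DispGraph V) (u v : V) : Prop := G.treeSide.Arc u v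
def DispGraph.NArc (G : DispGraph V) (u v : V) : Prop := G.netSide.Arc u v
noncomputable def DispGraph.inDeg (G : DispGraph V) : V → ℕ := G.toDGraph.inDeg
noncomputable def DispGraph.outDeg (G : DispGraph V) : V → ℕ := G.toDGraph.outDeg

/-- An embedding function on a display graph: an embedding of its tree side into
its network side. -/
abbrev EmbFun (G : DispGraph V) := EmbOn G.treeSide G.netSide

/-- The data of a containment structure: a display graph, an embedding function on it,
and an isolabelling into vertices of the ambient display graph or labels from `Λ`. -/
structure CStruct (V Λ : Type) where
  G : DispGraph V
  emb : EmbFun G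
  ι : V → V ⊕ Λ

/-- Relabelling a containment structure by a restriction function. -/
def CStruct.relabel (g : V ⊕ Λ → V ⊕ Λ) (χ : CStruct V Λ) : CStruct V Λ :=
  ⟨χ.G, χ.emb, fun v => g (χ.ι v)⟩

/-- `ι` is an `(S,Y)`-isolabelling on the display graph of `χ`, relative to the
ambient display graph `Din`. -/
def IsIsolabelling (Din : DispGraph V) (S : Set V) (Ys : Set Λ) (χ : CStruct V Λ) : Prop :=
  (∀ u ∈ χ.G.verts, (∃ s ∈ S, χ.ι u = Sum.inl s) ∨ (∃ y ∈ Ys, χ.ι u = Sum.inr y)) ∧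
  (∀ s ∈ S, ∃ u ∈ χ.G.verts, χ.ι u = Sum.inl s) ∧
  (∀ u ∈ χ.G.verts, ∀ s ∈ S, χ.ι u = Sum.inl s →
    (s ∈ Din.VN → u ∈ χ.G.VN) ∧ (s ∈ Din.VT → u ∈ χ.G.VT)) ∧
  (∀ u ∈ χ.G.verts, ∀ v ∈ χ.G.verts, ∀ s ∈ S, χ.ι u = Sum.inl s → χ.ι v = Sum.inl s → u = v) ∧
  (∀ u ∈ χ.G.verts, ∀ v ∈ χ.G.verts, ∀ s ∈ S, ∀ t ∈ S,
    χ.ι u = Sum.inl s → χ.ι v = Sum.inl t → (χ.G.Arc u v ↔ Din.Arc s t))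

/-- `χ` is an `(S,Y)`-containment structure relative to the ambient display graph `Din`. -/
def IsCS (Din : DispGraph V) (S : Set V) (Ys : Set Λ) (χ : CStruct V Λ) : Prop :=
  IsIsolabelling Din S Ys χ ∧
  (∀ u ∈ χ.G.verts, ∀ s ∈ S, χ.ι u = Sum.inl s →
    χ.G.inDeg u = Din.inDeg s ∧ χ.G.outDeg u = Din.outDeg s) ∧
  (∀ u ∈ χ.G.VT, χ.ι u ≠ χ.ι (χ.emb.vmap u) → χ.G.outDeg u = 2)

/-- A tree arc `uv` is `y`-redundant. -/
def TArcRedundant (χ : CStruct V Λ) (y : Λ) (u v : V) : Prop :=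
  χ.G.TArc u v ∧ χ.ι u = Sum.inr y ∧ χ.ι v = Sum.inr y ∧
    ∀ z ∈ χ.emb.pmap u v, χ.ι z = Sum.inr y

/-- A network arc `ab` is `y`-redundant. -/
def NArcRedundant (χ : CStruct V Λ) (y : Λ) (a b : V) : Prop :=
  χ.G.NArc a b ∧ χ.ι a = Sum.inr y ∧ χ.ι b = Sum.inr y ∧
    ∀ u v, χ.G.TArc u v → IsArcOf (χ.emb.pmap u v) a b → TArcRedundant χ y u v

def ArcRedundant (χ : CStruct V Λ) (y : Λ) (u v : V) : Prop :=
  TArcRedundant χ y u v ∨ NArcRedundant χ y u v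

/-- A tree vertex `v` is `y`-redundant. -/
def TVertRedundant (χ : CStruct V Λ) (y : Λ) (v : V) : Prop :=
  v ∈ χ.G.VT ∧ χ.ι v = Sum.inr y ∧ χ.ι (χ.emb.vmap v) = Sum.inr y ∧
  (∀ u, χ.G.Arc u v → ArcRedundant χ y u v) ∧
  (∀ u, χ.G.Arc v u → ArcRedundant χ y v u) ∧
  (∀ u, χ.G.Arc u (χ.emb.vmap v) → ArcRedundant χ y u (χ.emb.vmap v)) ∧
  (∀ u, χ.G.Arc (χ.emb.vmap v) u → ArcRedundant χ y (χ.emb.vmap v) u)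

/-- A network vertex `v` is `y`-redundant. -/
def NVertRedundant (χ : CStruct V Λ) (y : Λ) (v : V) : Prop :=
  v ∈ χ.G.VN ∧ χ.ι v = Sum.inr y ∧
  (∀ u, χ.G.Arc u v → ArcRedundant χ y u v) ∧
  (∀ u, χ.G.Arc v u → ArcRedundant χ y v u) ∧
  (∀ w ∈ χ.G.VT, χ.emb.vmap w = v → TVertRedundant χ y w)

def VertRedundant (χ : CStruct V Λ) (y : Λ) (v : V) : Prop :=
  TVertRedundant χ y v ∨ NVertRedundant χ y v

/-- `χ'` is the `g`-restriction of `χ`: relabel by `g` and delete all redundant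
arcs and vertices; the embedding and isolabelling are restricted accordingly. -/
def IsRestrictionOf (g : V ⊕ Λ → V ⊕ Λ) (χ' χ : CStruct V Λ) : Prop :=
  χ'.G.verts = χ.G.verts \ {v : V | ∃ y, VertRedundant (χ.relabel g) y v} ∧
  (∀ u v, χ'.G.Arc u v ↔ (χ.G.Arc u v ∧ ¬ ∃ y, ArcRedundant (χ.relabel g) y u v)) ∧
  χ'.G.VT = χ.G.VT ∩ χ'.G.verts ∧
  χ'.G.VN = χ.G.VN ∩ χ'.G.verts ∧
  (∀ v ∈ χ'.G.VT, χ'.emb.vmap v = χ.emb.vmap v) ∧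
  (∀ u v, χ'.G.TArc u v → χ'.emb.pmap u v = χ.emb.pmap u v) ∧
  (∀ v ∈ χ'.G.verts, χ'.ι v = g (χ.ι v))

/-- `g : S ∪ Y → S' ∪ Y` is a restriction function: identity on `S'`, mapping the rest
of `S` into `Y`, and mapping `Y` into `Y`. -/
def IsRestrictionFun (S S' : Set V) (Ys : Set Λ) (g : V ⊕ Λ → V ⊕ Λ) : Prop :=
  (∀ v ∈ S', g (Sum.inl v) = Sum.inl v) ∧
  (∀ v ∈ S, v ∉ S' → ∃ y ∈ Ys, g (Sum.inl v) = Sum.inr y) ∧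
  (∀ y ∈ Ys, ∃ y' ∈ Ys, g (Sum.inr y) = Sum.inr y')

/-- A well-behaved containment structure. -/
def WellBehaved (Din : DispGraph V) (Ys : Set Λ) (χ : CStruct V Λ) : Prop :=
  (∀ u v, χ.G.Arc u v → ¬ ∃ y ∈ Ys, ArcRedundant χ y u v) ∧
  (∀ v ∈ χ.G.verts, ¬ ∃ y ∈ Ys, VertRedundant χ y v) ∧
  (∀ u v, χ.G.Arc u v → ∀ y ∈ Ys, ∀ y' ∈ Ys,
    χ.ι u = Sum.inr y → χ.ι v = Sum.inr y' → y = y') ∧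
  (∀ u ∈ χ.G.verts, ∀ v ∈ χ.G.verts, ∀ s t : V, χ.ι u = Sum.inl s → χ.ι v = Sum.inl t →
    Relation.ReflTransGen χ.G.Arc u v → Relation.ReflTransGen Din.Arc s t)

/-- The labels used for signatures and reconciliations. -/
inductive Lab : Type where
  | past | future | left | right
deriving DecidableEq

/-- The restriction function sending every vertex of `P` to the label `y`. -/
noncomputable def sendVerts (P : Set V) (y : Lab) : V ⊕ Lab → V ⊕ Lab
  | Sum.inl v => if v ∈ P then Sum.inr y else Sum.inl v
  | Sum.inr y' => Sum.inr y'

/-- The restriction function sending `A` to label `a` and `B` to label `b`. -/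
noncomputable def sendVerts2 (A : Set V) (a : Lab) (B : Set V) (b : Lab) :
    V ⊕ Lab → V ⊕ Lab
  | Sum.inl v => if v ∈ A then Sum.inr a else if v ∈ B then Sum.inr b else Sum.inl v
  | Sum.inr y => Sum.inr y

/-- The restriction function merging all labels in `A` into the label `y`. -/
noncomputable def sendLabs (A : Set Lab) (y : Lab) : V ⊕ Lab → V ⊕ Lab
  | Sum.inl v => Sum.inl v
  | Sum.inr y' => if y' ∈ A then Sum.inr y else Sum.inr y'

/-- The restriction function sending label `a` to `ya` and label `b` to `yb`. -/
def sendTwoLabs (a ya b yb : Lab) : V ⊕ Lab → V ⊕ Lab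
  | Sum.inl v => Sum.inl v
  | Sum.inr y => if y = a then Sum.inr ya else if y = b then Sum.inr yb else Sum.inr y

/-- `(P,S,F)` is a bag of a tree decomposition of `Din`: a partition of the vertices
with `S` separating `P` from `F`. -/
def IsBag (Din : DispGraph V) (P S F : Set V) : Prop :=
  P ∪ S ∪ F = Din.verts ∧ Disjoint P S ∧ Disjoint P F ∧ Disjoint S F ∧
  ∀ u v, (Din.Arc u v ∨ Din.Arc v u) → u ∈ P → v ∈ F → False

def pfLabs : Set Lab := {Lab.past, Lab.future}
def lrfLabs : Set Lab := {Lab.left, Lab.right, Lab.future}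

/-- A signature for a bag with present `S` is an `(S,{past,future})`-containment structure. -/
def IsSignature (Din : DispGraph V) (S : Set V) (σ : CStruct V Lab) : Prop :=
  IsCS Din S pfLabs σ

/-- An `F`-partial solution for a bag `(P,S,F)` is a `(P∪S,{future})`-containment structure. -/
def IsPartialSolution (Din : DispGraph V) (P S : Set V) (ψ : CStruct V Lab) : Prop :=
  IsCS Din (P ∪ S) ({Lab.future} : Set Lab) ψ

/-- A (well-behaved) signature is valid for the bag `(P,S,F)` if it is the
`(P→past)`-restriction of a well-behaved `F`-partial solution. -/
def ValidSig (Din : DispGraph V) (P S F : Set V) (σ : CStruct V Lab) : Prop :=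
  ∃ ψ : CStruct V Lab, IsPartialSolution Din P S ψ ∧
    WellBehaved Din ({Lab.future} : Set Lab) ψ ∧
    IsRestrictionOf (sendVerts P Lab.past) σ ψ

/-- A reconciliation for a Join bag with present `S` is an
`(S,{left,right,future})`-containment structure. -/
def IsReconciliation (Din : DispGraph V) (S : Set V) (μ : CStruct V Lab) : Prop :=
  IsCS Din S lrfLabs μ

/-- A reconciliation is valid for the Join bag `(L∪R,S,F)` if it is the
`(L→left, R→right)`-restriction of a well-behaved `F`-partial solution. -/
def ValidRecon (Din : DispGraph V) (L R S F : Set V) (μ : CStruct V Lab) : Prop :=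
  ∃ ψ : CStruct V Lab, IsCS Din (L ∪ R ∪ S) ({Lab.future} : Set Lab) ψ ∧
    WellBehaved Din ({Lab.future} : Set Lab) ψ ∧
    IsRestrictionOf (sendVerts2 L Lab.left R Lab.right) μ ψ

/-- `z` is an internal vertex of the replacement path `Pm u v`. -/
def internalOf (Pm : V → V → List V) (u v z : V) : Prop :=
  z ∈ Pm u v ∧ z ≠ u ∧ z ≠ v

/-- `σ₀` is a subdivision of the containment structure `σ`, with each network
arc `uv` of `σ` replaced by the path `Pm u v`. -/
def IsSubdivisionOfCS (σ₀ σ : CStruct V Λ) (Pm : V → V → List V) : Prop :=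
  σ₀.G.VT = σ.G.VT ∧
  (∀ u v, σ₀.G.TArc u v ↔ σ.G.TArc u v) ∧
  σ.G.VN ⊆ σ₀.G.VN ∧
  σ₀.G.verts = σ.G.verts ∪ {z : V | ∃ u v, σ.G.NArc u v ∧ z ∈ Pm u v} ∧
  (∀ u v, σ.G.NArc u v → DipathFrom σ₀.G.NArc u v (Pm u v) ∧ 2 ≤ (Pm u v).length) ∧
  (∀ u v, σ.G.NArc u v → 2 < (Pm u v).length →
    ∃ y : Λ, σ.ι u = Sum.inr y ∧ σ.ι v = Sum.inr y) ∧
  (∀ u v, σ.G.NArc u v → ∀ z, internalOf Pm u v z →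
    z ∉ σ.G.verts ∧ z ∈ σ₀.G.VN ∧ σ₀.ι z = σ.ι u) ∧
  (∀ u v u' v', σ.G.NArc u v → σ.G.NArc u' v' → (u, v) ≠ (u', v') →
    ∀ z, internalOf Pm u v z → ¬ internalOf Pm u' v' z) ∧
  (∀ a b, σ₀.G.NArc a b ↔ ∃ u v, σ.G.NArc u v ∧ IsArcOf (Pm u v) a b) ∧
  (∀ v ∈ σ.G.verts, σ₀.ι v = σ.ι v) ∧
  (∀ v ∈ σ.G.VT, σ₀.emb.vmap v = σ.emb.vmap v) ∧
  (∀ u v, σ.G.TArc u v →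
    (σ₀.emb.pmap u v).head? = (σ.emb.pmap u v).head? ∧
    (σ₀.emb.pmap u v).getLast? = (σ.emb.pmap u v).getLast? ∧
    ∀ a b, IsArcOf (σ₀.emb.pmap u v) a b ↔
      ∃ c d, IsArcOf (σ.emb.pmap u v) c d ∧ IsArcOf (Pm c d) a b)

/-- `χ` has a long `y`-path: a suppressible degree-(1,1) network vertex between two
network arcs, all three vertices labelled `y`, with no tree vertex embedded into it. -/
def LongYPath (χ : CStruct V Λ) (y : Λ) : Prop :=
  ∃ x₁ x₂ x₃ : V, χ.G.NArc x₁ x₂ ∧ χ.G.NArc x₂ x₃ ∧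
    {u : V | χ.G.NArc u x₂}.ncard = 1 ∧ {u : V | χ.G.NArc x₂ u}.ncard = 1 ∧
    χ.ι x₁ = Sum.inr y ∧ χ.ι x₂ = Sum.inr y ∧ χ.ι x₃ = Sum.inr y ∧
    ∀ w ∈ χ.G.VT, χ.emb.vmap w ≠ x₂

def IsCompact (χ : CStruct V Λ) : Prop := ∀ y : Λ, ¬ LongYPath χ y

/-- `σ` is the compact form of `σ₀`: `σ` is compact and `σ₀` is a subdivision of `σ`. -/
def IsCompactFormOf (σ σ₀ : CStruct V Λ) : Prop :=
  IsCompact σ ∧ ∃ Pm : V → V → List V, IsSubdivisionOfCS σ₀ σ Pm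

/-- Isomorphism of containment structures. -/
def CSIso (χ χ' : CStruct V Λ) : Prop :=
  ∃ f : V → V, Set.BijOn f χ.G.verts χ'.G.verts ∧
    (∀ v ∈ χ.G.verts, (v ∈ χ.G.VT ↔ f v ∈ χ'.G.VT)) ∧
    (∀ v ∈ χ.G.verts, (v ∈ χ.G.VN ↔ f v ∈ χ'.G.VN)) ∧
    (∀ u ∈ χ.G.verts, ∀ v ∈ χ.G.verts, (χ.G.Arc u v ↔ χ'.G.Arc (f u) (f v))) ∧
    (∀ v ∈ χ.G.verts, χ'.ι (f v) = χ.ι v) ∧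
    (∀ v ∈ χ.G.VT, χ'.emb.vmap (f v) = f (χ.emb.vmap v)) ∧
    (∀ u v, χ.G.TArc u v → χ'.emb.pmap (f u) (f v) = (χ.emb.pmap u v).map f)

/-! ### Auxiliary development -/

section AuxBasic

variable {V Λ : Type}

lemma mem_of_head?' {p : List V} {a : V} (h : p.head? = some a) : a ∈ p := by
  cases p with
  | nil => simp at h
  | cons x t => simp only [List.head?_cons, Option.some.injEq] at h; subst h; exact List.mem_cons_self

lemma chain'_tail_pred {R : V → V → Prop} :
    ∀ {p : List V}, p.Chain' R → ∀ z ∈ p.tail, ∃ w, R w z := by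
  intro p
  induction p with
  | nil => simp
  | cons a t ih =>
    intro h z hz
    cases t with
    | nil => simp at hz
    | cons b t' =>
      simp only [List.Chain', List.isChain_cons_cons] at h
      rcases List.mem_cons.mp hz with rfl | hz'
      · exact ⟨a, h.1⟩
      · exact ih h.2 z hz'

lemma listArcs_cons_cons (a b : V) (t : List V) :
    listArcs (a :: b :: t) = (a, b) :: listArcs (b :: t) := rfl

lemma chain'_of_forall {R R' : V → V → Prop} :
    ∀ {p : List V}, p.Chain' R → (∀ a b, R a b → (a, b) ∈ listArcs p → R' a b) → p.Chain' R' := by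
  intro p
  induction p with
  | nil => intro _ _; exact List.isChain_nil
  | cons a t ih =>
    intro h hf
    cases t with
    | nil => exact List.isChain_singleton a
    | cons b t' =>
      simp only [List.Chain', List.isChain_cons_cons] at h ⊢
      refine ⟨hf a b h.1 (by rw [listArcs_cons_cons]; exact List.mem_cons_self), ih h.2 ?_⟩
      intro x y hR hxy
      exact hf x y hR (by rw [listArcs_cons_cons]; exact List.mem_cons_of_mem _ hxy)

lemma CStruct.VT_subset (χ : CStruct V Λ) : χ.G.VT ⊆ χ.G.verts := by
  rw [← χ.G.union_eq]; exact Set.subset_union_left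

lemma CStruct.VN_subset (χ : CStruct V Λ) : χ.G.VN ⊆ χ.G.verts := by
  rw [← χ.G.union_eq]; exact Set.subset_union_right

lemma CStruct.not_TArc_NArc (χ : CStruct V Λ) {u v : V}
    (hT : χ.G.TArc u v) (hN : χ.G.NArc u v) : False :=
  χ.G.shared_out u ⟨hT.2.1, hN.2.1⟩ v hT.1

lemma CStruct.vmap_mem_VN (χ : CStruct V Λ) {u : V} (h : u ∈ χ.G.VT) :
    χ.emb.vmap u ∈ χ.G.VN :=
  χ.emb.vmap_mem u h

lemma CStruct.vmap_mem_pmap (χ : CStruct V Λ) {u v : V} (h : χ.G.TArc u v) :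
    χ.emb.vmap u ∈ χ.emb.pmap u v :=
  mem_of_head?' (χ.emb.path_spec h).2.2.1

lemma CStruct.pmap_subset_VN (χ : CStruct V Λ) {u v : V} (h : χ.G.TArc u v) :
    ∀ z ∈ χ.emb.pmap u v, z ∈ χ.G.VN := by
  intro z hz
  obtain ⟨hch, _, hhd, _⟩ := χ.emb.path_spec h
  cases p : χ.emb.pmap u v with
  | nil => rw [p] at hz; simp at hz
  | cons a t =>
    rw [p] at hz hch hhd
    simp only [List.head?_cons, Option.some.injEq] at hhd
    rcases List.mem_cons.mp hz with rfl | hz'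
    · rw [hhd]; exact χ.vmap_mem_VN h.2.1
    · obtain ⟨w, hw⟩ := chain'_tail_pred hch z hz'
      exact hw.2.2

lemma CStruct.pmap_subset_verts (χ : CStruct V Λ) {u v : V} (h : χ.G.TArc u v) :
    ∀ z ∈ χ.emb.pmap u v, z ∈ χ.G.verts :=
  fun z hz => χ.VN_subset (χ.pmap_subset_VN h z hz)

/-! ### Canonical redundancy predicates -/

def TRed (χ : CStruct V Λ) (P : V → Prop) (u v : V) : Prop :=
  χ.G.TArc u v ∧ P u ∧ P v ∧ ∀ z ∈ χ.emb.pmap u v, P z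

def NRed (χ : CStruct V Λ) (P : V → Prop) (a b : V) : Prop :=
  χ.G.NArc a b ∧ P a ∧ P b ∧
    ∀ u v, χ.G.TArc u v → IsArcOf (χ.emb.pmap u v) a b → TRed χ P u v

def ARed (χ : CStruct V Λ) (P : V → Prop) (u v : V) : Prop :=
  TRed χ P u v ∨ NRed χ P u v

def TVRed (χ : CStruct V Λ) (P : V → Prop) (v : V) : Prop :=
  v ∈ χ.G.VT ∧ P v ∧ P (χ.emb.vmap v) ∧
  (∀ u, χ.G.Arc u v → ARed χ P u v) ∧
  (∀ u, χ.G.Arc v u → ARed χ P v u) ∧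
  (∀ u, χ.G.Arc u (χ.emb.vmap v) → ARed χ P u (χ.emb.vmap v)) ∧
  (∀ u, χ.G.Arc (χ.emb.vmap v) u → ARed χ P (χ.emb.vmap v) u)

def NVRed (χ : CStruct V Λ) (P : V → Prop) (v : V) : Prop :=
  v ∈ χ.G.VN ∧ P v ∧
  (∀ u, χ.G.Arc u v → ARed χ P u v) ∧
  (∀ u, χ.G.Arc v u → ARed χ P v u) ∧
  (∀ w ∈ χ.G.VT, χ.emb.vmap w = v → TVRed χ P w)

def VRed (χ : CStruct V Λ) (P : V → Prop) (v : V) : Prop :=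
  TVRed χ P v ∨ NVRed χ P v

end AuxBasic

section AuxTrans

variable {V Λ : Type} {χ : CStruct V Λ} {m : V ⊕ Λ → V ⊕ Λ} {y : Λ} {P Q : V → Prop}

lemma tred_iff (hP : ∀ z ∈ χ.G.verts, (m (χ.ι z) = Sum.inr y ↔ P z)) {u v : V} :
    TArcRedundant (χ.relabel m) y u v ↔ TRed χ P u v := by
  constructor
  · rintro ⟨h1, h2, h3, h4⟩
    exact ⟨h1, (hP u (χ.VT_subset h1.2.1)).mp h2, (hP v (χ.VT_subset h1.2.2)).mp h3,
      fun z hz => (hP z (χ.pmap_subset_verts h1 z hz)).mp (h4 z hz)⟩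
  · rintro ⟨h1, h2, h3, h4⟩
    exact ⟨h1, (hP u (χ.VT_subset h1.2.1)).mpr h2, (hP v (χ.VT_subset h1.2.2)).mpr h3,
      fun z hz => (hP z (χ.pmap_subset_verts h1 z hz)).mpr (h4 z hz)⟩

lemma nred_iff (hP : ∀ z ∈ χ.G.verts, (m (χ.ι z) = Sum.inr y ↔ P z)) {a b : V} :
    NArcRedundant (χ.relabel m) y a b ↔ NRed χ P a b := by
  constructor
  · rintro ⟨h1, h2, h3, h4⟩
    exact ⟨h1, (hP a (χ.VN_subset h1.2.1)).mp h2, (hP b (χ.VN_subset h1.2.2)).mp h3,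
      fun u v hT hab => (tred_iff hP).mp (h4 u v hT hab)⟩
  · rintro ⟨h1, h2, h3, h4⟩
    exact ⟨h1, (hP a (χ.VN_subset h1.2.1)).mpr h2, (hP b (χ.VN_subset h1.2.2)).mpr h3,
      fun u v hT hab => (tred_iff hP).mpr (h4 u v hT hab)⟩

lemma ared_iff (hP : ∀ z ∈ χ.G.verts, (m (χ.ι z) = Sum.inr y ↔ P z)) {u v : V} :
    ArcRedundant (χ.relabel m) y u v ↔ ARed χ P u v :=
  or_congr (tred_iff hP) (nred_iff hP)

lemma tvred_iff (hP : ∀ z ∈ χ.G.verts, (m (χ.ι z) = Sum.inr y ↔ P z)) {v : V} :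
    TVertRedundant (χ.relabel m) y v ↔ TVRed χ P v := by
  constructor
  · rintro ⟨h1, h2, h3, h4, h5, h6, h7⟩
    exact ⟨h1, (hP v (χ.VT_subset h1)).mp h2,
      (hP _ (χ.VN_subset (χ.vmap_mem_VN h1))).mp h3,
      fun u hu => (ared_iff hP).mp (h4 u hu), fun u hu => (ared_iff hP).mp (h5 u hu),
      fun u hu => (ared_iff hP).mp (h6 u hu), fun u hu => (ared_iff hP).mp (h7 u hu)⟩
  · rintro ⟨h1, h2, h3, h4, h5, h6, h7⟩
    exact ⟨h1, (hP v (χ.VT_subset h1)).mpr h2,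
      (hP _ (χ.VN_subset (χ.vmap_mem_VN h1))).mpr h3,
      fun u hu => (ared_iff hP).mpr (h4 u hu), fun u hu => (ared_iff hP).mpr (h5 u hu),
      fun u hu => (ared_iff hP).mpr (h6 u hu), fun u hu => (ared_iff hP).mpr (h7 u hu)⟩

lemma nvred_iff (hP : ∀ z ∈ χ.G.verts, (m (χ.ι z) = Sum.inr y ↔ P z)) {v : V} :
    NVertRedundant (χ.relabel m) y v ↔ NVRed χ P v := by
  constructor
  · rintro ⟨h1, h2, h3, h4, h5⟩
    exact ⟨h1, (hP v (χ.VN_subset h1)).mp h2,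
      fun u hu => (ared_iff hP).mp (h3 u hu), fun u hu => (ared_iff hP).mp (h4 u hu),
      fun w hw hvm => (tvred_iff hP).mp (h5 w hw hvm)⟩
  · rintro ⟨h1, h2, h3, h4, h5⟩
    exact ⟨h1, (hP v (χ.VN_subset h1)).mpr h2,
      fun u hu => (ared_iff hP).mpr (h3 u hu), fun u hu => (ared_iff hP).mpr (h4 u hu),
      fun w hw hvm => (tvred_iff hP).mpr (h5 w hw hvm)⟩

lemma vred_iff (hP : ∀ z ∈ χ.G.verts, (m (χ.ι z) = Sum.inr y ↔ P z)) {v : V} :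
    VertRedundant (χ.relabel m) y v ↔ VRed χ P v :=
  or_congr (tvred_iff hP) (nvred_iff hP)

lemma tred_mono (h : ∀ z ∈ χ.G.verts, P z → Q z) {u v : V} :
    TRed χ P u v → TRed χ Q u v := by
  rintro ⟨h1, h2, h3, h4⟩
  exact ⟨h1, h u (χ.VT_subset h1.2.1) h2, h v (χ.VT_subset h1.2.2) h3,
    fun z hz => h z (χ.pmap_subset_verts h1 z hz) (h4 z hz)⟩

lemma nred_mono (h : ∀ z ∈ χ.G.verts, P z → Q z) {a b : V} :
    NRed χ P a b → NRed χ Q a b := by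
  rintro ⟨h1, h2, h3, h4⟩
  exact ⟨h1, h a (χ.VN_subset h1.2.1) h2, h b (χ.VN_subset h1.2.2) h3,
    fun u v hT hab => tred_mono h (h4 u v hT hab)⟩

lemma ared_mono (h : ∀ z ∈ χ.G.verts, P z → Q z) {u v : V} :
    ARed χ P u v → ARed χ Q u v :=
  Or.imp (tred_mono h) (nred_mono h)

lemma tvred_mono (h : ∀ z ∈ χ.G.verts, P z → Q z) {v : V} :
    TVRed χ P v → TVRed χ Q v := by
  rintro ⟨h1, h2, h3, h4, h5, h6, h7⟩
  exact ⟨h1, h v (χ.VT_subset h1) h2, h _ (χ.VN_subset (χ.vmap_mem_VN h1)) h3,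
    fun u hu => ared_mono h (h4 u hu), fun u hu => ared_mono h (h5 u hu),
    fun u hu => ared_mono h (h6 u hu), fun u hu => ared_mono h (h7 u hu)⟩

lemma nvred_mono (h : ∀ z ∈ χ.G.verts, P z → Q z) {v : V} :
    NVRed χ P v → NVRed χ Q v := by
  rintro ⟨h1, h2, h3, h4, h5⟩
  exact ⟨h1, h v (χ.VN_subset h1) h2,
    fun u hu => ared_mono h (h3 u hu), fun u hu => ared_mono h (h4 u hu),
    fun w hw hvm => tvred_mono h (h5 w hw hvm)⟩

lemma vred_mono (h : ∀ z ∈ χ.G.verts, P z → Q z) {v : V} :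
    VRed χ P v → VRed χ Q v :=
  Or.imp (tvred_mono h) (nvred_mono h)

lemma ared_congr (h : ∀ z ∈ χ.G.verts, (P z ↔ Q z)) {u v : V} :
    ARed χ P u v ↔ ARed χ Q u v :=
  ⟨ared_mono fun z hz => (h z hz).mp, ared_mono fun z hz => (h z hz).mpr⟩

lemma vred_congr (h : ∀ z ∈ χ.G.verts, (P z ↔ Q z)) {v : V} :
    VRed χ P v ↔ VRed χ Q v :=
  ⟨vred_mono fun z hz => (h z hz).mp, vred_mono fun z hz => (h z hz).mpr⟩

lemma ared_pin {u v : V} (h : ARed χ P u v) : P u ∧ P v := by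
  rcases h with ⟨_, h2, h3, _⟩ | ⟨_, h2, h3, _⟩ <;> exact ⟨h2, h3⟩

lemma ared_mem {u v : V} (h : ARed χ P u v) : u ∈ χ.G.verts ∧ v ∈ χ.G.verts := by
  rcases h with ⟨h1, _⟩ | ⟨h1, _⟩
  · exact ⟨χ.VT_subset h1.2.1, χ.VT_subset h1.2.2⟩
  · exact ⟨χ.VN_subset h1.2.1, χ.VN_subset h1.2.2⟩

lemma vred_pin {v : V} (h : VRed χ P v) : P v ∧ v ∈ χ.G.verts := by
  rcases h with ⟨h1, h2, _⟩ | ⟨h1, h2, _⟩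
  · exact ⟨h2, χ.VT_subset h1⟩
  · exact ⟨h2, χ.VN_subset h1⟩

lemma vred_arc_in {v u : V} (h : VRed χ P v) (ha : χ.G.Arc u v) : ARed χ P u v := by
  rcases h with ⟨_, _, _, h4, _⟩ | ⟨_, _, h3, _⟩
  · exact h4 u ha
  · exact h3 u ha

lemma vred_arc_out {v u : V} (h : VRed χ P v) (ha : χ.G.Arc v u) : ARed χ P v u := by
  rcases h with ⟨_, _, _, _, h5, _⟩ | ⟨_, _, _, h4, _⟩
  · exact h5 u ha
  · exact h4 u ha

end AuxTrans

section TwoStage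

variable {V : Type}

/-- Arc removed by restriction along `m1`. -/
def R1A (ψ : CStruct V Lab) (m1 : V ⊕ Lab → V ⊕ Lab) (u v : V) : Prop :=
  ∃ y, ArcRedundant (ψ.relabel m1) y u v

/-- Vertex removed by restriction along `m1`. -/
def R1V (ψ : CStruct V Lab) (m1 : V ⊕ Lab → V ⊕ Lab) (v : V) : Prop :=
  ∃ y, VertRedundant (ψ.relabel m1) y v

/-- The labelling class of `y` under `m1`. -/
def Kfn (ψ : CStruct V Lab) (m1 : V ⊕ Lab → V ⊕ Lab) (y : Lab) (z : V) : Prop :=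
  m1 (ψ.ι z) = Sum.inr y

lemma r1a_iff {ψ : CStruct V Lab} {m1 : V ⊕ Lab → V ⊕ Lab} {u v : V} :
    R1A ψ m1 u v ↔ ∃ y, ARed ψ (Kfn ψ m1 y) u v :=
  exists_congr fun _ => ared_iff fun _ _ => Iff.rfl

lemma r1v_iff {ψ : CStruct V Lab} {m1 : V ⊕ Lab → V ⊕ Lab} {v : V} :
    R1V ψ m1 v ↔ ∃ y, VRed ψ (Kfn ψ m1 y) v :=
  exists_congr fun _ => vred_iff fun _ _ => Iff.rfl

variable {ψ χ' : CStruct V Lab} {m1 m2 : V ⊕ Lab → V ⊕ Lab} {Q Q' Pp Pf : V → Prop}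

lemma verts'_sub (hres : IsRestrictionOf m1 χ' ψ) : χ'.G.verts ⊆ ψ.G.verts := by
  rw [hres.1]; exact Set.diff_subset

lemma mem_verts' (hres : IsRestrictionOf m1 χ' ψ) {v : V}
    (h1 : v ∈ ψ.G.verts) (h2 : ¬ R1V ψ m1 v) : v ∈ χ'.G.verts := by
  rw [hres.1]; exact ⟨h1, h2⟩

lemma not_r1v_of_mem (hres : IsRestrictionOf m1 χ' ψ) {v : V}
    (h : v ∈ χ'.G.verts) : ¬ R1V ψ m1 v := by
  rw [hres.1] at h; exact h.2

lemma arc'_iff (hres : IsRestrictionOf m1 χ' ψ) {u v : V} :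
    χ'.G.Arc u v ↔ ψ.G.Arc u v ∧ ¬ R1A ψ m1 u v :=
  hres.2.1 u v

lemma tarc'_iff (hres : IsRestrictionOf m1 χ' ψ) {u v : V} :
    χ'.G.TArc u v ↔ ψ.G.TArc u v ∧ ¬ R1A ψ m1 u v := by
  constructor
  · rintro ⟨hA, hu, hv⟩
    have h2 := (hres.2.1 u v).mp hA
    rw [hres.2.2.1] at hu hv
    exact ⟨⟨h2.1, hu.1, hv.1⟩, h2.2⟩
  · rintro ⟨⟨hA, hu, hv⟩, hR⟩
    have hA' : χ'.G.Arc u v := (hres.2.1 u v).mpr ⟨hA, hR⟩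
    refine ⟨hA', ?_, ?_⟩ <;> rw [hres.2.2.1]
    · exact ⟨hu, χ'.G.toDGraph.arc_left hA'⟩
    · exact ⟨hv, χ'.G.toDGraph.arc_right hA'⟩

lemma narc'_iff (hres : IsRestrictionOf m1 χ' ψ) {u v : V} :
    χ'.G.NArc u v ↔ ψ.G.NArc u v ∧ ¬ R1A ψ m1 u v := by
  constructor
  · rintro ⟨hA, hu, hv⟩
    have h2 := (hres.2.1 u v).mp hA
    rw [hres.2.2.2.1] at hu hv
    exact ⟨⟨h2.1, hu.1, hv.1⟩, h2.2⟩
  · rintro ⟨⟨hA, hu, hv⟩, hR⟩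
    have hA' : χ'.G.Arc u v := (hres.2.1 u v).mpr ⟨hA, hR⟩
    refine ⟨hA', ?_, ?_⟩ <;> rw [hres.2.2.2.1]
    · exact ⟨hu, χ'.G.toDGraph.arc_left hA'⟩
    · exact ⟨hv, χ'.G.toDGraph.arc_right hA'⟩

lemma pmap'_eq (hres : IsRestrictionOf m1 χ' ψ) {u v : V} (h : χ'.G.TArc u v) :
    χ'.emb.pmap u v = ψ.emb.pmap u v :=
  hres.2.2.2.2.2.1 u v h

lemma vmap'_eq (hres : IsRestrictionOf m1 χ' ψ) {v : V} (h : v ∈ χ'.G.VT) :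
    χ'.emb.vmap v = ψ.emb.vmap v :=
  hres.2.2.2.2.1 v h

lemma ι'_eq (hres : IsRestrictionOf m1 χ' ψ) {v : V} (h : v ∈ χ'.G.verts) :
    χ'.ι v = m1 (ψ.ι v) :=
  hres.2.2.2.2.2.2 v h

/-- side hypotheses for a target class `Q` with complement `Q'`. -/
def Hside (ψ : CStruct V Lab) (m1 : V ⊕ Lab → V ⊕ Lab) (Q Q' : V → Prop) : Prop :=
  ∀ y, (∀ z ∈ ψ.G.verts, Kfn ψ m1 y z → Q z) ∨ (∀ z ∈ ψ.G.verts, Kfn ψ m1 y z → Q' z)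

def Hexcl (ψ : CStruct V Lab) (Q Q' : V → Prop) : Prop :=
  ∀ z ∈ ψ.G.verts, Q z → Q' z → False

lemma r1a_tred (hside : Hside ψ m1 Q Q') (hx : Hexcl ψ Q Q') {u v a : V}
    (hT : ψ.G.TArc u v) (hR : R1A ψ m1 u v)
    (ha : a = u ∨ a ∈ ψ.emb.pmap u v) (hQ : Q a) : TRed ψ Q u v := by
  obtain ⟨y, hy⟩ := r1a_iff.mp hR
  rcases hy with hT' | hN'
  · rcases hside y with h | h
    · exact tred_mono h hT'
    · exfalso
      have hKa : Kfn ψ m1 y a := by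
        rcases ha with rfl | ha
        exacts [hT'.2.1, hT'.2.2.2 a ha]
      have hav : a ∈ ψ.G.verts := by
        rcases ha with rfl | ha
        exacts [ψ.VT_subset hT.2.1, ψ.pmap_subset_verts hT a ha]
      exact hx a hav hQ (h a hav hKa)
  · exact absurd hN'.1 fun hN => ψ.not_TArc_NArc hT hN

lemma r1a_ared (hside : Hside ψ m1 Q Q') (hx : Hexcl ψ Q Q') {u v : V}
    (hR : R1A ψ m1 u v) (hend : Q u ∨ Q v) : ARed ψ Q u v := by
  obtain ⟨y, hy⟩ := r1a_iff.mp hR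
  rcases hside y with h | h
  · exact ared_mono h hy
  · exfalso
    obtain ⟨hKu, hKv⟩ := ared_pin hy
    obtain ⟨hu, hv⟩ := ared_mem hy
    rcases hend with hQ | hQ
    exacts [hx u hu hQ (h u hu hKu), hx v hv hQ (h v hv hKv)]

lemma r1v_tvred (hside : Hside ψ m1 Q Q') (hx : Hexcl ψ Q Q') {w v : V}
    (hw : w ∈ ψ.G.VT) (hvm : ψ.emb.vmap w = v) (hQv : Q v)
    (hR : R1V ψ m1 w) : TVRed ψ Q w := by
  obtain ⟨y, hy⟩ := r1v_iff.mp hR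
  have hvverts : v ∈ ψ.G.verts := hvm ▸ ψ.VN_subset (ψ.vmap_mem_VN hw)
  rcases hside y with h | h
  · rcases hy with hTV | hNV
    · exact tvred_mono h hTV
    · have hwVN : w ∈ ψ.G.VN := hNV.1
      have hfix : ψ.emb.vmap w = w := ψ.emb.fixes w ⟨hw, hwVN⟩
      have hQw : Q w := h w (ψ.VT_subset hw) hNV.2.1
      refine ⟨hw, hQw, ?_, ?_, ?_, ?_, ?_⟩
      · rw [hfix]; exact hQw
      · intro u hu; exact ared_mono h (hNV.2.2.1 u hu)
      · intro u hu; exact ared_mono h (hNV.2.2.2.1 u hu)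
      · intro u hu; rw [hfix] at hu ⊢; exact ared_mono h (hNV.2.2.1 u hu)
      · intro u hu; rw [hfix] at hu ⊢; exact ared_mono h (hNV.2.2.2.1 u hu)
  · exfalso
    rcases hy with hTV | hNV
    · have hk : Kfn ψ m1 y v := hvm ▸ hTV.2.2.1
      exact hx v hvverts hQv (h v hvverts hk)
    · have hwVN : w ∈ ψ.G.VN := hNV.1
      have hfix : ψ.emb.vmap w = w := ψ.emb.fixes w ⟨hw, hwVN⟩
      have hwv : w = v := by rw [← hfix, hvm]
      have hk : Kfn ψ m1 y v := hwv ▸ hNV.2.1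
      exact hx v hvverts hQv (h v hvverts hk)

lemma tred'_iff (hres : IsRestrictionOf m1 χ' ψ) {u v : V} :
    TRed χ' Q u v ↔ TRed ψ Q u v ∧ ¬ R1A ψ m1 u v := by
  constructor
  · rintro ⟨h1, h2, h3, h4⟩
    obtain ⟨hT, hR⟩ := (tarc'_iff hres).mp h1
    rw [pmap'_eq hres h1] at h4
    exact ⟨⟨hT, h2, h3, h4⟩, hR⟩
  · rintro ⟨⟨h1, h2, h3, h4⟩, hR⟩
    have hT' : χ'.G.TArc u v := (tarc'_iff hres).mpr ⟨h1, hR⟩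
    refine ⟨hT', h2, h3, ?_⟩
    rw [pmap'_eq hres hT']; exact h4

lemma nred'_to (hres : IsRestrictionOf m1 χ' ψ) (hside : Hside ψ m1 Q Q')
    (hx : Hexcl ψ Q Q') {a b : V} (h : NRed χ' Q a b) : NRed ψ Q a b := by
  obtain ⟨hN, ha, hb, hall⟩ := h
  obtain ⟨hNψ, _⟩ := (narc'_iff hres).mp hN
  refine ⟨hNψ, ha, hb, ?_⟩
  intro u v hT hab
  by_cases hR : R1A ψ m1 u v
  · exact r1a_tred hside hx hT hR (Or.inr (isArcOf_mem_left hab)) ha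
  · have hT' : χ'.G.TArc u v := (tarc'_iff hres).mpr ⟨hT, hR⟩
    have := hall u v hT' (by rw [pmap'_eq hres hT']; exact hab)
    exact ((tred'_iff hres).mp this).1

lemma nred_to' (hres : IsRestrictionOf m1 χ' ψ) {a b : V}
    (h : NRed ψ Q a b) (hR : ¬ R1A ψ m1 a b) : NRed χ' Q a b := by
  obtain ⟨hN, ha, hb, hall⟩ := h
  refine ⟨(narc'_iff hres).mpr ⟨hN, hR⟩, ha, hb, ?_⟩
  intro u v hT hab
  obtain ⟨hTψ, hR'⟩ := (tarc'_iff hres).mp hT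
  rw [pmap'_eq hres hT] at hab
  exact (tred'_iff hres).mpr ⟨hall u v hTψ hab, hR'⟩

lemma ared'_to (hres : IsRestrictionOf m1 χ' ψ) (hside : Hside ψ m1 Q Q')
    (hx : Hexcl ψ Q Q') {u v : V} (h : ARed χ' Q u v) : ARed ψ Q u v := by
  rcases h with hT | hN
  · exact Or.inl ((tred'_iff hres).mp hT).1
  · exact Or.inr (nred'_to hres hside hx hN)

lemma ared_to' (hres : IsRestrictionOf m1 χ' ψ) {u v : V}
    (h : ARed ψ Q u v) (hR : ¬ R1A ψ m1 u v) : ARed χ' Q u v := by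
  rcases h with hT | hN
  · exact Or.inl ((tred'_iff hres).mpr ⟨hT, hR⟩)
  · exact Or.inr (nred_to' hres hN hR)

lemma tvred'_to (hres : IsRestrictionOf m1 χ' ψ) (hside : Hside ψ m1 Q Q')
    (hx : Hexcl ψ Q Q') {v : V} (h : TVRed χ' Q v) : TVRed ψ Q v := by
  obtain ⟨h1, h2, h3, h4, h5, h6, h7⟩ := h
  have hvm := vmap'_eq hres h1
  rw [hres.2.2.1] at h1
  rw [hvm] at h3 h6 h7
  have harc : ∀ u w, ψ.G.Arc u w → Q u ∨ Q w →
      (χ'.G.Arc u w → ARed χ' Q u w) → ARed ψ Q u w := by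
    intro u w hA hQ hc
    by_cases hR : R1A ψ m1 u w
    · exact r1a_ared hside hx hR hQ
    · exact ared'_to hres hside hx (hc ((hres.2.1 u w).mpr ⟨hA, hR⟩))
  exact ⟨h1.1, h2, h3,
    fun u hu => harc u v hu (Or.inr h2) (h4 u),
    fun u hu => harc v u hu (Or.inl h2) (h5 u),
    fun u hu => harc u _ hu (Or.inr h3) (h6 u),
    fun u hu => harc _ u hu (Or.inl h3) (h7 u)⟩

lemma tvred_to' (hres : IsRestrictionOf m1 χ' ψ) {v : V}
    (h : TVRed ψ Q v) (hv : v ∈ χ'.G.verts) : TVRed χ' Q v := by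
  obtain ⟨h1, h2, h3, h4, h5, h6, h7⟩ := h
  have h1' : v ∈ χ'.G.VT := by rw [hres.2.2.1]; exact ⟨h1, hv⟩
  have hvm := vmap'_eq hres h1'
  have harc : ∀ u w, χ'.G.Arc u w → (ψ.G.Arc u w → ARed ψ Q u w) → ARed χ' Q u w := by
    intro u w hA hc
    obtain ⟨hAψ, hR⟩ := (hres.2.1 u w).mp hA
    exact ared_to' hres (hc hAψ) hR
  refine ⟨h1', h2, ?_, fun u hu => harc u v hu (h4 u), fun u hu => harc v u hu (h5 u),
    ?_, ?_⟩
  · rw [hvm]; exact h3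
  · intro u hu; rw [hvm] at hu ⊢; exact harc u _ hu (h6 u)
  · intro u hu; rw [hvm] at hu ⊢; exact harc _ u hu (h7 u)

lemma nvred'_to (hres : IsRestrictionOf m1 χ' ψ) (hside : Hside ψ m1 Q Q')
    (hx : Hexcl ψ Q Q') {v : V} (h : NVRed χ' Q v) : NVRed ψ Q v := by
  obtain ⟨h1, h2, h3, h4, h5⟩ := h
  rw [hres.2.2.2.1] at h1
  have harc : ∀ u w, ψ.G.Arc u w → Q u ∨ Q w →
      (χ'.G.Arc u w → ARed χ' Q u w) → ARed ψ Q u w := by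
    intro u w hA hQ hc
    by_cases hR : R1A ψ m1 u w
    · exact r1a_ared hside hx hR hQ
    · exact ared'_to hres hside hx (hc ((hres.2.1 u w).mpr ⟨hA, hR⟩))
  refine ⟨h1.1, h2, fun u hu => harc u v hu (Or.inr h2) (h3 u),
    fun u hu => harc v u hu (Or.inl h2) (h4 u), ?_⟩
  intro w hw hvmw
  by_cases hwv : w ∈ χ'.G.verts
  · have hw' : w ∈ χ'.G.VT := by rw [hres.2.2.1]; exact ⟨hw, hwv⟩
    have := h5 w hw' (by rw [vmap'_eq hres hw']; exact hvmw)
    exact tvred'_to hres hside hx this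
  · have hR : R1V ψ m1 w := by
      by_contra hc
      exact hwv (mem_verts' hres (ψ.VT_subset hw) hc)
    exact r1v_tvred hside hx hw hvmw h2 hR

lemma nvred_to' (hres : IsRestrictionOf m1 χ' ψ) {v : V}
    (h : NVRed ψ Q v) (hv : v ∈ χ'.G.verts) : NVRed χ' Q v := by
  obtain ⟨h1, h2, h3, h4, h5⟩ := h
  have harc : ∀ u w, χ'.G.Arc u w → (ψ.G.Arc u w → ARed ψ Q u w) → ARed χ' Q u w := by
    intro u w hA hc
    obtain ⟨hAψ, hR⟩ := (hres.2.1 u w).mp hA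
    exact ared_to' hres (hc hAψ) hR
  refine ⟨by rw [hres.2.2.2.1]; exact ⟨h1, hv⟩, h2,
    fun u hu => harc u v hu (h3 u), fun u hu => harc v u hu (h4 u), ?_⟩
  intro w hw hvmw
  have hwVT : w ∈ ψ.G.VT := by rw [hres.2.2.1] at hw; exact hw.1
  have hwv : w ∈ χ'.G.verts := by rw [hres.2.2.1] at hw; exact hw.2
  have hvmw' : ψ.emb.vmap w = v := by rw [← vmap'_eq hres hw]; exact hvmw
  exact tvred_to' hres (h5 w hwVT hvmw') hwv

lemma vred'_to (hres : IsRestrictionOf m1 χ' ψ) (hside : Hside ψ m1 Q Q')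
    (hx : Hexcl ψ Q Q') {v : V} (h : VRed χ' Q v) : VRed ψ Q v :=
  Or.imp (tvred'_to hres hside hx) (nvred'_to hres hside hx) h

lemma vred_to' (hres : IsRestrictionOf m1 χ' ψ) {v : V}
    (h : VRed ψ Q v) (hv : v ∈ χ'.G.verts) : VRed χ' Q v :=
  Or.imp (fun h' => tvred_to' hres h' hv) (fun h' => nvred_to' hres h' hv) h

end TwoStage

section Assemble

variable {V : Type} {ψ χ' : CStruct V Lab} {m1 m2 : V ⊕ Lab → V ⊕ Lab} {Pp Pf : V → Prop}

def K2fn (Pp Pf : V → Prop) (y : Lab) (z : V) : Prop :=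
  y = Lab.past ∧ Pp z ∨ y = Lab.future ∧ Pf z

lemma k2_past (z : V) : K2fn Pp Pf Lab.past z ↔ Pp z := by simp [K2fn]

lemma k2_future (z : V) : K2fn Pp Pf Lab.future z ↔ Pf z := by simp [K2fn]

lemma hP2_of (hres : IsRestrictionOf m1 χ' ψ)
    (hK2 : ∀ z ∈ ψ.G.verts, ∀ y, (m2 (m1 (ψ.ι z)) = Sum.inr y ↔ K2fn Pp Pf y z))
    (y : Lab) : ∀ z ∈ χ'.G.verts, (m2 (χ'.ι z) = Sum.inr y ↔ K2fn Pp Pf y z) := by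
  intro z hz; rw [ι'_eq hres hz]; exact hK2 z (verts'_sub hres hz) y

lemma arc_two_stage (hres : IsRestrictionOf m1 χ' ψ)
    (hK1 : Hside ψ m1 Pp Pf) (hexcl : Hexcl ψ Pp Pf)
    (hK2 : ∀ z ∈ ψ.G.verts, ∀ y, (m2 (m1 (ψ.ι z)) = Sum.inr y ↔ K2fn Pp Pf y z))
    (u v : V) :
    (R1A ψ m1 u v ∨ ∃ y, ArcRedundant (χ'.relabel m2) y u v) ↔
      (ARed ψ Pp u v ∨ ARed ψ Pf u v) := by
  have hsideF : Hside ψ m1 Pf Pp := fun y => (hK1 y).symm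
  have hxF : Hexcl ψ Pf Pp := fun z hz a b => hexcl z hz b a
  constructor
  · rintro (hR | ⟨y, hred⟩)
    · obtain ⟨y, hy⟩ := r1a_iff.mp hR
      rcases hK1 y with h | h
      exacts [Or.inl (ared_mono h hy), Or.inr (ared_mono h hy)]
    · have h2 : ARed χ' (K2fn Pp Pf y) u v := (ared_iff (hP2_of hres hK2 y)).mp hred
      rcases (ared_pin h2).1 with ⟨rfl, _⟩ | ⟨rfl, _⟩
      · have h3 : ARed χ' Pp u v := ared_mono (fun z _ h => (k2_past z).mp h) h2
        exact Or.inl (ared'_to hres hK1 hexcl h3)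
      · have h3 : ARed χ' Pf u v := ared_mono (fun z _ h => (k2_future z).mp h) h2
        exact Or.inr (ared'_to hres hsideF hxF h3)
  · rintro (hQ | hQ)
    · by_cases hR : R1A ψ m1 u v
      · exact Or.inl hR
      · refine Or.inr ⟨Lab.past, (ared_iff (hP2_of hres hK2 Lab.past)).mpr ?_⟩
        exact ared_mono (fun z _ h => (k2_past z).mpr h) (ared_to' hres hQ hR)
    · by_cases hR : R1A ψ m1 u v
      · exact Or.inl hR
      · refine Or.inr ⟨Lab.future, (ared_iff (hP2_of hres hK2 Lab.future)).mpr ?_⟩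
        exact ared_mono (fun z _ h => (k2_future z).mpr h) (ared_to' hres hQ hR)

lemma vert_two_stage (hres : IsRestrictionOf m1 χ' ψ)
    (hK1 : Hside ψ m1 Pp Pf) (hexcl : Hexcl ψ Pp Pf)
    (hK2 : ∀ z ∈ ψ.G.verts, ∀ y, (m2 (m1 (ψ.ι z)) = Sum.inr y ↔ K2fn Pp Pf y z))
    (v : V) :
    (R1V ψ m1 v ∨ ∃ y, VertRedundant (χ'.relabel m2) y v) ↔
      (VRed ψ Pp v ∨ VRed ψ Pf v) := by
  have hsideF : Hside ψ m1 Pf Pp := fun y => (hK1 y).symm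
  have hxF : Hexcl ψ Pf Pp := fun z hz a b => hexcl z hz b a
  constructor
  · rintro (hR | ⟨y, hred⟩)
    · obtain ⟨y, hy⟩ := r1v_iff.mp hR
      rcases hK1 y with h | h
      exacts [Or.inl (vred_mono h hy), Or.inr (vred_mono h hy)]
    · have h2 : VRed χ' (K2fn Pp Pf y) v := (vred_iff (hP2_of hres hK2 y)).mp hred
      rcases (vred_pin h2).1 with ⟨rfl, _⟩ | ⟨rfl, _⟩
      · have h3 : VRed χ' Pp v := vred_mono (fun z _ h => (k2_past z).mp h) h2
        exact Or.inl (vred'_to hres hK1 hexcl h3)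
      · have h3 : VRed χ' Pf v := vred_mono (fun z _ h => (k2_future z).mp h) h2
        exact Or.inr (vred'_to hres hsideF hxF h3)
  · rintro (hQ | hQ)
    · by_cases hR : R1V ψ m1 v
      · exact Or.inl hR
      · have hv : v ∈ χ'.G.verts := mem_verts' hres (vred_pin hQ).2 hR
        refine Or.inr ⟨Lab.past, (vred_iff (hP2_of hres hK2 Lab.past)).mpr ?_⟩
        exact vred_mono (fun z _ h => (k2_past z).mpr h) (vred_to' hres hQ hv)
    · by_cases hR : R1V ψ m1 v
      · exact Or.inl hR
      · have hv : v ∈ χ'.G.verts := mem_verts' hres (vred_pin hQ).2 hR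
        refine Or.inr ⟨Lab.future, (vred_iff (hP2_of hres hK2 Lab.future)).mpr ?_⟩
        exact vred_mono (fun z _ h => (k2_future z).mpr h) (vred_to' hres hQ hv)

end Assemble

section Restrict

variable {V : Type}

lemma r1v_arc_in {ψ : CStruct V Lab} {m1 : V ⊕ Lab → V ⊕ Lab} {u v : V}
    (h : R1V ψ m1 v) (ha : ψ.G.Arc u v) : R1A ψ m1 u v := by
  obtain ⟨y, hy⟩ := r1v_iff.mp h
  exact ⟨y, (ared_iff fun _ _ => Iff.rfl).mpr (vred_arc_in hy ha)⟩

lemma r1v_arc_out {ψ : CStruct V Lab} {m1 : V ⊕ Lab → V ⊕ Lab} {u v : V}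
    (h : R1V ψ m1 v) (ha : ψ.G.Arc v u) : R1A ψ m1 v u := by
  obtain ⟨y, hy⟩ := r1v_iff.mp h
  exact ⟨y, (ared_iff fun _ _ => Iff.rfl).mpr (vred_arc_out hy ha)⟩

lemma path_arc_survives {ψ : CStruct V Lab} {m : V ⊕ Lab → V ⊕ Lab} {u v a b : V}
    (hT : ψ.G.TArc u v) (hnr : ¬ ∃ y, ArcRedundant (ψ.relabel m) y u v)
    (hN : ψ.G.NArc a b) (hab : IsArcOf (ψ.emb.pmap u v) a b) :
    ¬ ∃ y, ArcRedundant (ψ.relabel m) y a b := by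
  rintro ⟨y, hy | hy⟩
  · exact ψ.not_TArc_NArc hy.1 hN
  · exact hnr ⟨y, Or.inl (hy.2.2.2 u v hT hab)⟩

noncomputable def restrictG (ψ : CStruct V Lab) (m : V ⊕ Lab → V ⊕ Lab) : DispGraph V where
  verts := ψ.G.verts \ {v : V | ∃ y, VertRedundant (ψ.relabel m) y v}
  Arc u v := ψ.G.Arc u v ∧ ¬ ∃ y, ArcRedundant (ψ.relabel m) y u v
  arc_left {u v} h := ⟨ψ.G.toDGraph.arc_left h.1, fun hr => h.2 (r1v_arc_out hr h.1)⟩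
  arc_right {u v} h := ⟨ψ.G.toDGraph.arc_right h.1, fun hr => h.2 (r1v_arc_in hr h.1)⟩
  VT := ψ.G.VT ∩ (ψ.G.verts \ {v : V | ∃ y, VertRedundant (ψ.relabel m) y v})
  VN := ψ.G.VN ∩ (ψ.G.verts \ {v : V | ∃ y, VertRedundant (ψ.relabel m) y v})
  union_eq := by
    rw [← Set.union_inter_distrib_right, ψ.G.union_eq]
    exact Set.inter_eq_right.mpr Set.diff_subset
  finite := ψ.G.finite.subset Set.diff_subset
  acyclic := fun v hv => ψ.G.acyclic v (Relation.TransGen.mono (p := ψ.G.Arc) (fun a b h => h.1) v v hv)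
  tree_indeg := by
    intro v
    refine le_trans (Set.ncard_le_ncard ?_ ?_) (ψ.G.tree_indeg v)
    · rintro u ⟨hA, hu, hvv⟩; exact ⟨hA.1, hu.1, hvv.1⟩
    · exact ψ.G.finite.subset fun u hu => ψ.G.toDGraph.arc_left hu.1
  indeg_le := by
    intro v
    refine le_trans (Set.ncard_le_ncard (fun u hu => hu.1) ?_) (ψ.G.indeg_le v)
    exact ψ.G.finite.subset fun u hu => ψ.G.toDGraph.arc_left hu
  outdeg_le := by
    intro v
    refine le_trans (Set.ncard_le_ncard (fun u hu => hu.1) ?_) (ψ.G.outdeg_le v)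
    exact ψ.G.finite.subset fun u hu => ψ.G.toDGraph.arc_right hu
  totdeg_le := by
    intro v
    refine le_trans (add_le_add ?_ ?_) (ψ.G.totdeg_le v)
    · exact Set.ncard_le_ncard (fun u hu => hu.1)
        (ψ.G.finite.subset fun u hu => ψ.G.toDGraph.arc_left hu)
    · exact Set.ncard_le_ncard (fun u hu => hu.1)
        (ψ.G.finite.subset fun u hu => ψ.G.toDGraph.arc_right hu)
  shared_out := by
    rintro v ⟨hv1, hv2⟩ u h
    exact ψ.G.shared_out v ⟨hv1.1, hv2.1⟩ u h.1
  shared_in_T := by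
    rintro v ⟨hv1, hv2⟩
    refine le_trans (Set.ncard_le_ncard ?_ ?_) (ψ.G.shared_in_T v ⟨hv1.1, hv2.1⟩)
    · rintro u ⟨hA, hu⟩; exact ⟨hA.1, hu.1⟩
    · exact ψ.G.finite.subset fun u hu => ψ.G.toDGraph.arc_left hu.1
  shared_in_N := by
    rintro v ⟨hv1, hv2⟩
    refine le_trans (Set.ncard_le_ncard ?_ ?_) (ψ.G.shared_in_N v ⟨hv1.1, hv2.1⟩)
    · rintro u ⟨hA, hu⟩; exact ⟨hA.1, hu.1⟩
    · exact ψ.G.finite.subset fun u hu => ψ.G.toDGraph.arc_left hu.1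

noncomputable def restrictEmb (ψ : CStruct V Lab) (m : V ⊕ Lab → V ⊕ Lab) :
    EmbOn (restrictG ψ m).treeSide (restrictG ψ m).netSide where
  vmap := ψ.emb.vmap
  pmap := ψ.emb.pmap
  vmap_mem := by
    intro u hu
    obtain ⟨huVT, huD⟩ := hu
    have hVN := ψ.vmap_mem_VN huVT
    refine ⟨hVN, ψ.VN_subset hVN, ?_⟩
    rintro ⟨y, hTV | hNV⟩
    · have hx : ψ.emb.vmap u ∈ ψ.G.VT := hTV.1
      have heq : u = ψ.emb.vmap u :=
        ψ.emb.inj u huVT _ hx (by rw [ψ.emb.fixes _ ⟨hx, hVN⟩])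
      exact huD.2 ⟨y, Or.inl (by rw [heq]; exact hTV)⟩
    · exact huD.2 ⟨y, Or.inl (hNV.2.2.2.2 u huVT rfl)⟩
  path_spec := by
    intro u v hT
    obtain ⟨⟨hA, hnr⟩, hu, hv⟩ := hT
    have hTψ : ψ.G.TArc u v := ⟨hA, hu.1, hv.1⟩
    obtain ⟨hch, hnd, hhd, hlast⟩ := ψ.emb.path_spec hTψ
    refine ⟨?_, hnd, hhd, hlast⟩
    refine chain'_of_forall hch ?_
    intro a b hR hab
    have hN : ψ.G.NArc a b := hR
    have hnr2 := path_arc_survives hTψ hnr hN hab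
    have hArc' : ψ.G.Arc a b ∧ ¬ ∃ y, ArcRedundant (ψ.relabel m) y a b := ⟨hN.1, hnr2⟩
    refine ⟨hArc', ⟨hN.2.1, ψ.VN_subset hN.2.1, ?_⟩, ⟨hN.2.2, ψ.VN_subset hN.2.2, ?_⟩⟩
    · exact fun hr => hnr2 (r1v_arc_out hr hN.1)
    · exact fun hr => hnr2 (r1v_arc_in hr hN.1)
  inj := fun u hu v hv h => ψ.emb.inj u hu.1 v hv.1 h
  fixes := fun u hu => ψ.emb.fixes u ⟨hu.1.1, hu.2.1⟩
  arc_disjoint := by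
    intro u v u' v' h1 h2 hne e he
    exact ψ.emb.arc_disjoint ⟨h1.1.1, h1.2.1.1, h1.2.2.1⟩ ⟨h2.1.1, h2.2.1.1, h2.2.2.1⟩ hne e he
  share := by
    intro u v u' v' h1 h2 hne z hz hz'
    exact ψ.emb.share ⟨h1.1.1, h1.2.1.1, h1.2.2.1⟩ ⟨h2.1.1, h2.2.1.1, h2.2.2.1⟩ hne z hz hz'

noncomputable def restrictCS (ψ : CStruct V Lab) (m : V ⊕ Lab → V ⊕ Lab) : CStruct V Lab :=
  ⟨restrictG ψ m, restrictEmb ψ m, fun v => m (ψ.ι v)⟩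

lemma isRestrictionOf_restrictCS (ψ : CStruct V Lab) (m : V ⊕ Lab → V ⊕ Lab) :
    IsRestrictionOf m (restrictCS ψ m) ψ :=
  ⟨rfl, fun _ _ => Iff.rfl, rfl, rfl, fun _ _ => rfl, fun _ _ _ => rfl, fun _ _ => rfl⟩

end Restrict

section PartialSol

variable {V : Type}

lemma sendVerts_inl_mem {B : Set V} {y : Lab} {s : V} (h : s ∈ B) :
    sendVerts B y (Sum.inl s) = Sum.inr y := by simp [sendVerts, h]

lemma sendVerts_inl_not_mem {B : Set V} {y : Lab} {s : V} (h : s ∉ B) :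
    sendVerts B y (Sum.inl s) = Sum.inl s := by simp [sendVerts, h]

lemma sendVerts_inr {B : Set V} {y y' : Lab} :
    sendVerts B y (Sum.inr y') = Sum.inr y' := rfl

lemma sendVerts_eq_inl {B : Set V} {y : Lab} {x : V ⊕ Lab} {s : V}
    (h : sendVerts B y x = Sum.inl s) : x = Sum.inl s ∧ s ∉ B := by
  cases x with
  | inl v =>
    by_cases hv : v ∈ B
    · rw [sendVerts_inl_mem hv] at h; exact nomatch h
    · rw [sendVerts_inl_not_mem hv] at h
      obtain rfl : v = s := Sum.inl.injEq _ _ ▸ h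
      exact ⟨rfl, hv⟩
  | inr y' => exact nomatch h

lemma isCS_restrict (Din : DispGraph V) (S0 S' B : Set V) (ψ : CStruct V Lab)
    (hψ : IsCS Din S0 ({Lab.future} : Set Lab) ψ)
    (hS'0 : S' ⊆ S0) (hS'B : Disjoint S' B) (hcov : S0 ⊆ S' ∪ B) :
    IsCS Din S' ({Lab.future} : Set Lab) (restrictCS ψ (sendVerts B Lab.future)) := by
  set m := sendVerts B Lab.future with hm
  have hres := isRestrictionOf_restrictCS ψ m
  obtain ⟨⟨hi1, hi2, hi3, hi4, hi5⟩, hdeg, hout⟩ := hψ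
  set ψL := restrictCS ψ m with hψLdef
  have hιL : ∀ v, ψL.ι v = m (ψ.ι v) := fun v => rfl
  have hinv : ∀ v s, ψL.ι v = Sum.inl s → ψ.ι v = Sum.inl s ∧ s ∉ B := by
    intro v s h; rw [hιL] at h; exact sendVerts_eq_inl h
  refine ⟨⟨?_, ?_, ?_, ?_, ?_⟩, ?_, ?_⟩
  · -- i1
    intro u hu
    rcases hi1 u (verts'_sub hres hu) with ⟨s, hs, hιs⟩ | ⟨y, hy, hιy⟩
    · by_cases hsB : s ∈ B
      · exact Or.inr ⟨Lab.future, rfl, by rw [hιL, hιs]; exact sendVerts_inl_mem hsB⟩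
      · exact Or.inl ⟨s, (hcov hs).resolve_right hsB,
          by rw [hιL, hιs]; exact sendVerts_inl_not_mem hsB⟩
    · exact Or.inr ⟨y, hy, by rw [hιL, hιy]; rfl⟩
  · -- i2
    intro s hs
    obtain ⟨u, hu, hιs⟩ := hi2 s (hS'0 hs)
    have hsB : s ∉ B := Set.disjoint_left.mp hS'B hs
    refine ⟨u, mem_verts' hres hu ?_, by rw [hιL, hιs]; exact sendVerts_inl_not_mem hsB⟩
    rintro ⟨y, hy⟩
    have hpin : m (ψ.ι u) = Sum.inr y :=
      (vred_pin ((vred_iff fun _ _ => Iff.rfl).mp hy)).1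
    rw [hm, hιs, sendVerts_inl_not_mem hsB] at hpin
    exact nomatch hpin
  · -- i3
    intro u hu s hs hιs
    obtain ⟨hψι, -⟩ := hinv u s hιs
    have h3 := hi3 u (verts'_sub hres hu) s (hS'0 hs) hψι
    exact ⟨fun h => ⟨h3.1 h, hu⟩, fun h => ⟨h3.2 h, hu⟩⟩
  · -- i4
    intro u hu v hv s hs h1 h2
    exact hi4 u (verts'_sub hres hu) v (verts'_sub hres hv) s (hS'0 hs)
      (hinv u s h1).1 (hinv v s h2).1
  · -- i5
    intro u hu v hv s hs t ht h1 h2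
    have base := hi5 u (verts'_sub hres hu) v (verts'_sub hres hv) s (hS'0 hs) t (hS'0 ht)
      (hinv u s h1).1 (hinv v t h2).1
    constructor
    · intro h; exact base.mp h.1
    · intro h
      refine ⟨base.mpr h, ?_⟩
      rintro ⟨y, hred⟩
      have hpin : m (ψ.ι u) = Sum.inr y :=
        (ared_pin ((ared_iff fun _ _ => Iff.rfl).mp hred)).1
      have h2' : m (ψ.ι u) = Sum.inl s := h1
      exact nomatch (h2'.symm.trans hpin)
  · -- degrees
    intro u hu s hs hι
    have h2' : m (ψ.ι u) = Sum.inl s := hι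
    have hψι := (hinv u s hι).1
    have hin : {w : V | ψL.G.Arc w u} = {w : V | ψ.G.Arc w u} := by
      ext w
      refine ⟨fun h => h.1, fun h => ⟨h, ?_⟩⟩
      rintro ⟨y, hred⟩
      have hpin : m (ψ.ι u) = Sum.inr y :=
        (ared_pin ((ared_iff fun _ _ => Iff.rfl).mp hred)).2
      exact nomatch (h2'.symm.trans hpin)
    have hout' : {w : V | ψL.G.Arc u w} = {w : V | ψ.G.Arc u w} := by
      ext w
      refine ⟨fun h => h.1, fun h => ⟨h, ?_⟩⟩
      rintro ⟨y, hred⟩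
      have hpin : m (ψ.ι u) = Sum.inr y :=
        (ared_pin ((ared_iff fun _ _ => Iff.rfl).mp hred)).1
      exact nomatch (h2'.symm.trans hpin)
    have hd := hdeg u (verts'_sub hres hu) s (hS'0 hs) hψι
    constructor
    · calc ψL.G.inDeg u = {w : V | ψ.G.Arc w u}.ncard := congrArg Set.ncard hin
        _ = Din.inDeg s := hd.1
    · calc ψL.G.outDeg u = {w : V | ψ.G.Arc u w}.ncard := congrArg Set.ncard hout'
        _ = Din.outDeg s := hd.2
  · -- out-degree 2 clause
    intro u hu hne
    have huVT : u ∈ ψ.G.VT := hu.1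
    have hneψ : ψ.ι u ≠ ψ.ι (ψ.emb.vmap u) := by
      intro h
      exact hne (show m (ψ.ι u) = m (ψ.ι (ψ.emb.vmap u)) by rw [h])
    have h2 := hout u huVT hneψ
    have hset : {w : V | ψL.G.Arc u w} = {w : V | ψ.G.Arc u w} := by
      ext w
      refine ⟨fun h => h.1, fun h => ⟨h, ?_⟩⟩
      rintro ⟨y, hred | hred⟩
      · have hT : ψ.G.TArc u w := hred.1
        have hu' : m (ψ.ι u) = Sum.inr y := hred.2.1
        have hvm : m (ψ.ι (ψ.emb.vmap u)) = Sum.inr y := hred.2.2.2 _ (ψ.vmap_mem_pmap hT)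
        exact hne (show m (ψ.ι u) = m (ψ.ι (ψ.emb.vmap u)) from hu'.trans hvm.symm)
      · exact ψ.G.shared_out u ⟨huVT, hred.1.2.1⟩ w h
    calc ψL.G.outDeg u = {w : V | ψ.G.Arc u w}.ncard := congrArg Set.ncard hset
      _ = 2 := h2

lemma wb_restrict (Din : DispGraph V) (B : Set V) (ψ : CStruct V Lab)
    (hwb : WellBehaved Din ({Lab.future} : Set Lab) ψ)
    (hlab : ∀ z ∈ ψ.G.verts, (∃ s : V, ψ.ι z = Sum.inl s) ∨ ψ.ι z = Sum.inr Lab.future) :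
    WellBehaved Din ({Lab.future} : Set Lab) (restrictCS ψ (sendVerts B Lab.future)) := by
  set m := sendVerts B Lab.future with hm
  have hres := isRestrictionOf_restrictCS ψ m
  set ψL := restrictCS ψ m with hψLdef
  have hfut : ∀ z ∈ ψ.G.verts, ∀ y : Lab, m (ψ.ι z) = Sum.inr y → y = Lab.future := by
    intro z hz y h
    rw [hm] at h
    rcases hlab z hz with ⟨s, hs⟩ | hs
    · rw [hs] at h
      by_cases hsB : s ∈ B
      · rw [sendVerts_inl_mem hsB] at h
        exact (Sum.inr.injEq _ _ ▸ h).symm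
      · rw [sendVerts_inl_not_mem hsB] at h
        exact nomatch h
    · rw [hs] at h
      exact (Sum.inr.injEq _ _ ▸ (h : (Sum.inr Lab.future : V ⊕ Lab) = Sum.inr y)).symm
  have hside : Hside ψ m (Kfn ψ m Lab.future) (fun _ => False) := by
    intro y
    left
    intro z hz hK
    have := hfut z hz y hK
    subst this
    exact hK
  have hx : Hexcl ψ (Kfn ψ m Lab.future) (fun _ => False) := fun z _ _ h => h
  constructor
  · -- no redundant arcs
    intro u v hA
    rintro ⟨y, hy, hred⟩
    rw [Set.mem_singleton_iff] at hy
    subst hy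
    have hred' : ARed ψL (Kfn ψ m Lab.future) u v := hred
    have hredψ : ARed ψ (Kfn ψ m Lab.future) u v := ared'_to hres hside hx hred'
    exact hA.2 ⟨Lab.future, (ared_iff fun _ _ => Iff.rfl).mpr hredψ⟩
  refine ⟨?_, ?_, ?_⟩
  · -- no redundant vertices
    intro v hv
    rintro ⟨y, hy, hred⟩
    rw [Set.mem_singleton_iff] at hy
    subst hy
    have hred' : VRed ψL (Kfn ψ m Lab.future) v := hred
    have hredψ : VRed ψ (Kfn ψ m Lab.future) v := vred'_to hres hside hx hred'
    exact hv.2 ⟨Lab.future, (vred_iff fun _ _ => Iff.rfl).mpr hredψ⟩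
  · -- label coherence
    intro u v _ y hy y' hy' _ _
    rw [Set.mem_singleton_iff] at hy hy'
    rw [hy, hy']
  · -- ancestry
    intro u hu v hv s t h1 h2 hpath
    exact hwb.2.2.2 u (verts'_sub hres hu) v (verts'_sub hres hv) s t
      (sendVerts_eq_inl h1).1 (sendVerts_eq_inl h2).1
      (Relation.ReflTransGen.mono (fun a b h => h.1) _ _ hpath)

end PartialSol

section Main

variable {V : Type}

def PpA (ψ : CStruct V Lab) (A : Set V) (z : V) : Prop := ∃ a ∈ A, ψ.ι z = Sum.inl a

def PfB (ψ : CStruct V Lab) (B : Set V) (z : V) : Prop :=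
  (∃ b ∈ B, ψ.ι z = Sum.inl b) ∨ ψ.ι z = Sum.inr Lab.future

lemma valid_side (Din : DispGraph V) (A B S F : Set V)
    (hAB : Disjoint A B) (hSB : Disjoint S B)
    (la lb : Lab) (hla : la ≠ Lab.future) (hlab' : la ≠ lb)
    (m1 m2 : V ⊕ Lab → V ⊕ Lab)
    (hm1A : ∀ s ∈ A, m1 (Sum.inl s) = Sum.inr la)
    (hm1B : ∀ s ∈ B, m1 (Sum.inl s) = Sum.inr lb)
    (hm1o : ∀ s : V, s ∉ A → s ∉ B → m1 (Sum.inl s) = Sum.inl s)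
    (hm1f : m1 (Sum.inr Lab.future) = Sum.inr Lab.future)
    (hm2a : m2 (Sum.inr la) = Sum.inr Lab.past)
    (hm2b : m2 (Sum.inr lb) = Sum.inr Lab.future)
    (hm2f : m2 (Sum.inr Lab.future) = Sum.inr Lab.future)
    (hm2l : ∀ s : V, m2 (Sum.inl s) = Sum.inl s)
    (ψ μ σ : CStruct V Lab)
    (hψ : IsCS Din (A ∪ B ∪ S) ({Lab.future} : Set Lab) ψ)
    (hwb : WellBehaved Din ({Lab.future} : Set Lab) ψ)
    (hresμ : IsRestrictionOf m1 μ ψ)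
    (hσ : IsRestrictionOf m2 σ μ) :
    ValidSig Din A S F σ := by
  classical
  have hexcl : Hexcl ψ (PpA ψ A) (PfB ψ B) := by
    rintro z _ ⟨a, ha, hz⟩ (⟨b, hb, hz'⟩ | hz')
    · obtain rfl : a = b := Sum.inl.inj (hz.symm.trans hz')
      exact Set.disjoint_left.mp hAB ha hb
    · exact nomatch (hz.symm.trans hz')
  have hclass : ∀ z ∈ ψ.G.verts,
      (∃ s, ψ.ι z = Sum.inl s) ∨ ψ.ι z = Sum.inr Lab.future := by
    intro z hz
    rcases hψ.1.1 z hz with ⟨s, _, h⟩ | ⟨y, hy, h⟩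
    · exact Or.inl ⟨s, h⟩
    · rw [Set.mem_singleton_iff] at hy; subst hy; exact Or.inr h
  -- route 1 hypotheses
  have hK1 : Hside ψ m1 (PpA ψ A) (PfB ψ B) := by
    intro y
    by_cases hy : y = la
    · left
      intro z hz hK
      have hK' : m1 (ψ.ι z) = Sum.inr la := hy ▸ hK
      rcases hclass z hz with ⟨s, hψz⟩ | hψz
      · rw [hψz] at hK'
        by_cases hsA : s ∈ A
        · exact ⟨s, hsA, hψz⟩
        · by_cases hsB : s ∈ B
          · rw [hm1B s hsB] at hK'
            exact absurd (Sum.inr.inj hK').symm hlab'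
          · rw [hm1o s hsA hsB] at hK'
            exact nomatch hK'
      · rw [hψz, hm1f] at hK'
        exact absurd (Sum.inr.inj hK').symm hla
    · right
      intro z hz hK
      have hK' : m1 (ψ.ι z) = Sum.inr y := hK
      rcases hclass z hz with ⟨s, hψz⟩ | hψz
      · rw [hψz] at hK'
        by_cases hsA : s ∈ A
        · rw [hm1A s hsA] at hK'
          exact absurd (Sum.inr.inj hK').symm hy
        · by_cases hsB : s ∈ B
          · exact Or.inl ⟨s, hsB, hψz⟩
          · rw [hm1o s hsA hsB] at hK'
            exact nomatch hK'
      · exact Or.inr hψz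
  have hK2 : ∀ z ∈ ψ.G.verts, ∀ y,
      (m2 (m1 (ψ.ι z)) = Sum.inr y ↔ K2fn (PpA ψ A) (PfB ψ B) y z) := by
    intro z hz y
    rcases hclass z hz with ⟨s, hψz⟩ | hψz
    · rw [hψz]
      by_cases hsA : s ∈ A
      · rw [hm1A s hsA, hm2a]
        constructor
        · intro h
          exact Or.inl ⟨(Sum.inr.inj h).symm, ⟨s, hsA, hψz⟩⟩
        · rintro (⟨rfl, -⟩ | ⟨rfl, hPf⟩)
          · rfl
          · rcases hPf with ⟨b, hb, h'⟩ | h'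
            · obtain rfl : s = b := Sum.inl.inj (hψz.symm.trans h')
              exact absurd hb (Set.disjoint_left.mp hAB hsA)
            · exact nomatch (hψz.symm.trans h')
      · by_cases hsB : s ∈ B
        · rw [hm1B s hsB, hm2b]
          constructor
          · intro h
            exact Or.inr ⟨(Sum.inr.inj h).symm, Or.inl ⟨s, hsB, hψz⟩⟩
          · rintro (⟨rfl, hPp⟩ | ⟨rfl, -⟩)
            · obtain ⟨a, ha, h'⟩ := hPp
              obtain rfl : s = a := Sum.inl.inj (hψz.symm.trans h')
              exact absurd ha hsA
            · rfl
        · rw [hm1o s hsA hsB, hm2l]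
          constructor
          · intro h
            exact nomatch h
          · rintro (⟨rfl, hPp⟩ | ⟨rfl, hPf⟩)
            · obtain ⟨a, ha, h'⟩ := hPp
              obtain rfl : s = a := Sum.inl.inj (hψz.symm.trans h')
              exact absurd ha hsA
            · rcases hPf with ⟨b, hb, h'⟩ | h'
              · obtain rfl : s = b := Sum.inl.inj (hψz.symm.trans h')
                exact absurd hb hsB
              · exact nomatch (hψz.symm.trans h')
    · rw [hψz, hm1f, hm2f]
      constructor
      · intro h
        exact Or.inr ⟨(Sum.inr.inj h).symm, Or.inr hψz⟩
      · rintro (⟨rfl, hPp⟩ | ⟨rfl, -⟩)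
        · obtain ⟨a, _, h'⟩ := hPp
          exact nomatch (hψz.symm.trans h')
        · rfl
  -- route 2 hypotheses
  have hresP := isRestrictionOf_restrictCS ψ (sendVerts B Lab.future)
  have hK1' : Hside ψ (sendVerts B Lab.future) (PpA ψ A) (PfB ψ B) := by
    intro y
    right
    intro z hz hK
    have hK' : sendVerts B Lab.future (ψ.ι z) = Sum.inr y := hK
    rcases hclass z hz with ⟨s, hψz⟩ | hψz
    · rw [hψz] at hK'
      by_cases hsB : s ∈ B
      · exact Or.inl ⟨s, hsB, hψz⟩
      · rw [sendVerts_inl_not_mem hsB] at hK'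
        exact nomatch hK'
    · exact Or.inr hψz
  have hK2' : ∀ z ∈ ψ.G.verts, ∀ y,
      (sendVerts A Lab.past (sendVerts B Lab.future (ψ.ι z)) = Sum.inr y ↔
        K2fn (PpA ψ A) (PfB ψ B) y z) := by
    intro z hz y
    rcases hclass z hz with ⟨s, hψz⟩ | hψz
    · rw [hψz]
      by_cases hsA : s ∈ A
      · have hsB : s ∉ B := fun hb => Set.disjoint_left.mp hAB hsA hb
        rw [sendVerts_inl_not_mem hsB, sendVerts_inl_mem hsA]
        constructor
        · intro h
          exact Or.inl ⟨(Sum.inr.inj h).symm, ⟨s, hsA, hψz⟩⟩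
        · rintro (⟨rfl, -⟩ | ⟨rfl, hPf⟩)
          · rfl
          · rcases hPf with ⟨b, hb, h'⟩ | h'
            · obtain rfl : s = b := Sum.inl.inj (hψz.symm.trans h')
              exact absurd hb hsB
            · exact nomatch (hψz.symm.trans h')
      · by_cases hsB : s ∈ B
        · rw [sendVerts_inl_mem hsB, sendVerts_inr]
          constructor
          · intro h
            exact Or.inr ⟨(Sum.inr.inj h).symm, Or.inl ⟨s, hsB, hψz⟩⟩
          · rintro (⟨rfl, hPp⟩ | ⟨rfl, -⟩)
            · obtain ⟨a, ha, h'⟩ := hPp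
              obtain rfl : s = a := Sum.inl.inj (hψz.symm.trans h')
              exact absurd ha hsA
            · rfl
        · rw [sendVerts_inl_not_mem hsB, sendVerts_inl_not_mem hsA]
          constructor
          · intro h
            exact nomatch h
          · rintro (⟨rfl, hPp⟩ | ⟨rfl, hPf⟩)
            · obtain ⟨a, ha, h'⟩ := hPp
              obtain rfl : s = a := Sum.inl.inj (hψz.symm.trans h')
              exact absurd ha hsA
            · rcases hPf with ⟨b, hb, h'⟩ | h'
              · obtain rfl : s = b := Sum.inl.inj (hψz.symm.trans h')
                exact absurd hb hsB
              · exact nomatch (hψz.symm.trans h')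
    · rw [hψz, sendVerts_inr, sendVerts_inr]
      constructor
      · intro h
        exact Or.inr ⟨(Sum.inr.inj h).symm, Or.inr hψz⟩
      · rintro (⟨rfl, hPp⟩ | ⟨rfl, -⟩)
        · obtain ⟨a, _, h'⟩ := hPp
          exact nomatch (hψz.symm.trans h')
        · rfl
  -- the two-stage equivalences
  have hGA1 := arc_two_stage hresμ hK1 hexcl hK2
  have hGA2 := arc_two_stage hresP hK1' hexcl hK2'
  have hGV1 := vert_two_stage hresμ hK1 hexcl hK2
  have hGV2 := vert_two_stage hresP hK1' hexcl hK2'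
  refine ⟨restrictCS ψ (sendVerts B Lab.future), ?_, ?_, ?_⟩
  · -- partial solution
    refine isCS_restrict Din (A ∪ B ∪ S) (A ∪ S) B ψ hψ ?_ ?_ ?_
    · exact Set.union_subset_union Set.subset_union_left (le_refl S)
    · exact Set.disjoint_union_left.mpr ⟨hAB, hSB⟩
    · intro x hx
      rcases hx with (h | h) | h
      · exact Or.inl (Or.inl h)
      · exact Or.inr h
      · exact Or.inl (Or.inr h)
  · exact wb_restrict Din B ψ hwb hclass
  · -- restriction clauses
    have hverts : σ.G.verts = (restrictCS ψ (sendVerts B Lab.future)).G.verts \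
        {v : V | ∃ y, VertRedundant ((restrictCS ψ (sendVerts B Lab.future)).relabel
          (sendVerts A Lab.past)) y v} := by
      ext v
      constructor
      · intro hv
        have hμv : v ∈ μ.G.verts := verts'_sub hσ hv
        have hψv : v ∈ ψ.G.verts := verts'_sub hresμ hμv
        have h1 : ¬ R1V μ m2 v := not_r1v_of_mem hσ hv
        have h2 : ¬ R1V ψ m1 v := not_r1v_of_mem hresμ hμv
        have h3 : ¬ (VRed ψ (PpA ψ A) v ∨ VRed ψ (PfB ψ B) v) := by
          intro h
          rcases (hGV1 v).mpr h with h' | h'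
          exacts [h2 h', h1 h']
        refine ⟨mem_verts' hresP hψv ?_, ?_⟩
        · intro hR; exact h3 ((hGV2 v).mp (Or.inl hR))
        · intro hR; exact h3 ((hGV2 v).mp (Or.inr hR))
      · rintro ⟨hvP, hnr⟩
        have hψv : v ∈ ψ.G.verts := verts'_sub hresP hvP
        have h2 : ¬ R1V ψ (sendVerts B Lab.future) v := not_r1v_of_mem hresP hvP
        have h3 : ¬ (VRed ψ (PpA ψ A) v ∨ VRed ψ (PfB ψ B) v) := by
          intro h
          rcases (hGV2 v).mpr h with h' | h'
          exacts [h2 h', hnr h']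
        have h4 : ¬ R1V ψ m1 v := fun h => h3 ((hGV1 v).mp (Or.inl h))
        have h5 : ¬ R1V μ m2 v := fun h => h3 ((hGV1 v).mp (Or.inr h))
        exact mem_verts' hσ (mem_verts' hresμ hψv h4) h5
    have hsubP : σ.G.verts ⊆ (restrictCS ψ (sendVerts B Lab.future)).G.verts := by
      rw [hverts]; exact Set.diff_subset
    refine ⟨hverts, ?_, ?_, ?_, ?_, ?_, ?_⟩
    · -- arcs
      intro u v
      rw [arc'_iff hσ, arc'_iff hresμ, arc'_iff hresP]
      constructor
      · rintro ⟨⟨hA, h1⟩, h2⟩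
        have h3 : ¬ (ARed ψ (PpA ψ A) u v ∨ ARed ψ (PfB ψ B) u v) := by
          intro h
          rcases (hGA1 u v).mpr h with h' | h'
          exacts [h1 h', h2 h']
        exact ⟨⟨hA, fun h => h3 ((hGA2 u v).mp (Or.inl h))⟩,
          fun h => h3 ((hGA2 u v).mp (Or.inr h))⟩
      · rintro ⟨⟨hA, h1⟩, h2⟩
        have h3 : ¬ (ARed ψ (PpA ψ A) u v ∨ ARed ψ (PfB ψ B) u v) := by
          intro h
          rcases (hGA2 u v).mpr h with h' | h'
          exacts [h1 h', h2 h']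
        exact ⟨⟨hA, fun h => h3 ((hGA1 u v).mp (Or.inl h))⟩,
          fun h => h3 ((hGA1 u v).mp (Or.inr h))⟩
    · -- VT
      rw [hσ.2.2.1, hresμ.2.2.1, hresP.2.2.1]
      ext v
      constructor
      · rintro ⟨⟨h1, _⟩, h3⟩
        exact ⟨⟨h1, hsubP h3⟩, h3⟩
      · rintro ⟨⟨h1, _⟩, h3⟩
        exact ⟨⟨h1, verts'_sub hσ h3⟩, h3⟩
    · -- VN
      rw [hσ.2.2.2.1, hresμ.2.2.2.1, hresP.2.2.2.1]
      ext v
      constructor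
      · rintro ⟨⟨h1, _⟩, h3⟩
        exact ⟨⟨h1, hsubP h3⟩, h3⟩
      · rintro ⟨⟨h1, _⟩, h3⟩
        exact ⟨⟨h1, verts'_sub hσ h3⟩, h3⟩
    · -- vmap
      intro v hv
      have hv' : v ∈ μ.G.VT := by rw [hσ.2.2.1] at hv; exact hv.1
      rw [vmap'_eq hσ hv, vmap'_eq hresμ hv']
      rfl
    · -- pmap
      intro u v hT
      have hTμ : μ.G.TArc u v := ((tarc'_iff hσ).mp hT).1
      rw [pmap'_eq hσ hT, pmap'_eq hresμ hTμ]
      rfl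
    · -- labels
      intro v hv
      have hμv : v ∈ μ.G.verts := verts'_sub hσ hv
      have hψv : v ∈ ψ.G.verts := verts'_sub hresμ hμv
      rw [ι'_eq hσ hv, ι'_eq hresμ hμv]
      show m2 (m1 (ψ.ι v)) = sendVerts A Lab.past (sendVerts B Lab.future (ψ.ι v))
      rcases hclass v hψv with ⟨s, h⟩ | h
      · rw [h]
        by_cases hsA : s ∈ A
        · have hsB : s ∉ B := fun hb => Set.disjoint_left.mp hAB hsA hb
          rw [hm1A s hsA, hm2a, sendVerts_inl_not_mem hsB, sendVerts_inl_mem hsA]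
        · by_cases hsB : s ∈ B
          · rw [hm1B s hsB, hm2b, sendVerts_inl_mem hsB, sendVerts_inr]
          · rw [hm1o s hsA hsB, hm2l, sendVerts_inl_not_mem hsB, sendVerts_inl_not_mem hsA]
      · rw [h, hm1f, hm2f, sendVerts_inr, sendVerts_inr]

end Main

/-- If a well-behaved reconciliation `μ` for a Join bag `(L∪R,S,F)` is
valid, then its `(left→past, right→future)`-restriction is a valid signature for the
left child bag `(L,S,F∪R)` and its `(right→past, left→future)`-restriction is a valid
signature for the right child bag `(R,S,F∪L)`. -/
theorem validRecon_children {V : Type} (Din : DispGraph V) (L R S F : Set V)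
    (hbag : IsBag Din (L ∪ R) S F) (hbagL : IsBag Din L S (F ∪ R))
    (hbagR : IsBag Din R S (F ∪ L)) (hLR : Disjoint L R)
    (μ : CStruct V Lab) (hμ : IsReconciliation Din S μ)
    (hwbμ : WellBehaved Din lrfLabs μ) (hvalid : ValidRecon Din L R S F μ)
    (σL σR : CStruct V Lab)
    (hL : IsRestrictionOf (sendTwoLabs Lab.left Lab.past Lab.right Lab.future) σL μ)
    (hR : IsRestrictionOf (sendTwoLabs Lab.right Lab.past Lab.left Lab.future) σR μ) :
    ValidSig Din L S (F ∪ R) σL ∧ ValidSig Din R S (F ∪ L) σR := by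
  obtain ⟨ψ, hψCS, hψWB, hresμ⟩ := hvalid
  have hLS : Disjoint L S := (Set.disjoint_union_left.mp hbag.2.1).1
  have hRS : Disjoint R S := (Set.disjoint_union_left.mp hbag.2.1).2
  constructor
  · refine valid_side Din L R S (F ∪ R) hLR hRS.symm Lab.left Lab.right (by decide) (by decide)
      (sendVerts2 L Lab.left R Lab.right)
      (sendTwoLabs Lab.left Lab.past Lab.right Lab.future)
      ?_ ?_ ?_ rfl ?_ ?_ ?_ (fun s => rfl) ψ μ σL hψCS hψWB hresμ hL
    · intro s hs; simp [sendVerts2, hs]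
    · intro s hs
      have hsL : s ∉ L := Set.disjoint_right.mp hLR hs
      simp [sendVerts2, hs, hsL]
    · intro s h1 h2; simp [sendVerts2, h1, h2]
    · simp [sendTwoLabs]
    · simp [sendTwoLabs]
    · simp [sendTwoLabs]
  · have hψCS' : IsCS Din (R ∪ L ∪ S) ({Lab.future} : Set Lab) ψ := by
      rw [Set.union_comm R L]; exact hψCS
    refine valid_side Din R L S (F ∪ L) hLR.symm hLS.symm Lab.right Lab.left (by decide) (by decide)
      (sendVerts2 L Lab.left R Lab.right)
      (sendTwoLabs Lab.right Lab.past Lab.left Lab.future)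
      ?_ ?_ ?_ rfl ?_ ?_ ?_ (fun s => rfl) ψ μ σR hψCS' hψWB hresμ hR
    · intro s hs
      have hsL : s ∉ L := Set.disjoint_right.mp hLR hs
      simp [sendVerts2, hs, hsL]
    · intro s hs; simp [sendVerts2, hs]
    · intro s h1 h2; simp [sendVerts2, h1, h2]
    · simp [sendTwoLabs]
    · simp [sendTwoLabs]
    · simp [sendTwoLabs]

end TreeContainment
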